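/- arXiv:1707.08399 — 8 statements merged into one kernel-verified Lean document; each statement's English description precedes it below -/
import Mathlib

section
/- Let 1 < p < ∞ and let q = 1 or q = ∞. Then the Banach algebra B(X) of all bounded linear operators on the Banach space X = (⊕_{n∈ℕ} ℓ_q^n)_{ℓ_p} is not a Grothendieck space. -/
set_option synthInstance.maxHeartbeats 1000000
set_option maxHeartbeats 1000000

open scoped ENNReal

/-- A Banach space `X` is a Grothendieck space if every weak*-convergent sequence in the
dual space `X*` converges weakly. -/
def IsGrothendieckSpace (X : Type*) [NormedAddCommGroup X] [NormedSpace ℝ X] : Prop :=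
  ∀ (f : ℕ → (X →L[ℝ] ℝ)) (g : X →L[ℝ] ℝ),
    (∀ x : X, Filter.Tendsto (fun n => f n x) Filter.atTop (nhds (g x))) →
    ∀ Φ : (X →L[ℝ] ℝ) →L[ℝ] ℝ,
      Filter.Tendsto (fun n => Φ (f n)) Filter.atTop (nhds (Φ g))

/-!
Write `e_{n,k}` for the unit vectors of the `n`-th block `ℓ_q^{n+1}` of `X`. For an operator `T`
on `X`, the entries `⟨T e_{n,k}, e_{n,0}⟩` (`q = ∞`), resp. `⟨T e_{n,0}, e_{n,k}⟩` (`q = 1`),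
satisfy `∑_k |·| ≤ ‖T‖`, because `ℓ_∞^{n+1}` contains all sign vectors, resp. because the `ℓ_1`
norm is the sum of the coordinates. Taking a weak* limit as `n → ∞` along an ultrafilter
(Banach–Alaoglu) gives functionals `φ_k` on `B(X)` with `∑_k |φ_k T| ≤ ‖T‖`, biorthogonal to the
contractions `S_j` that move coordinate `j` of every block to coordinate `0` (resp. back).
The partial sums of `∑_k φ_k` converge weak* to the full sum `g`, but not weakly: a weak*
cluster point `Φ ∈ B(X)**` of `(S_j)` kills every partial sum while `Φ g = 1`.
-/

open Filter Topology Finset Fin.NatCast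

theorem StrongDual.exists_tendsto_ultrafilter_of_eventually_norm_le {𝕜 E ι : Type*}
    [NontriviallyNormedField 𝕜] [ProperSpace 𝕜] [SeminormedAddCommGroup E] [NormedSpace 𝕜 E]
    (U : Ultrafilter ι) {u : ι → StrongDual 𝕜 E} {C : ℝ} (hu : ∀ᶠ i in U, ‖u i‖ ≤ C) :
    ∃ Λ : StrongDual 𝕜 E, ∀ x, Tendsto (fun i => u i x) U (𝓝 (Λ x)) := by
  have hmem : ∀ᶠ i in U, StrongDual.toWeakDual (u i) ∈
      WeakDual.toStrongDual ⁻¹' Metric.closedBall (0 : StrongDual 𝕜 E) C := by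
    simpa using hu
  obtain ⟨Λ, -, hΛ⟩ := (WeakDual.isCompact_closedBall (0 : StrongDual 𝕜 E) C).ultrafilter_le_nhds
    (U.map (StrongDual.toWeakDual ∘ u)) (by rwa [Ultrafilter.coe_map, le_principal_iff])
  exact ⟨WeakDual.toStrongDual Λ, tendsto_iff_forall_eval_tendsto_topDualPairing.mp hΛ⟩

theorem not_isGrothendieckSpace_of_summable_biorthogonal {Y : Type*} [NormedAddCommGroup Y]
    [NormedSpace ℝ Y] (φ : ℕ → StrongDual ℝ Y) (S : ℕ → Y)
    (hφ : ∀ y K, ∑ k ∈ range K, |φ k y| ≤ ‖y‖) (hS : ∀ j, ‖S j‖ ≤ 1)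
    (hφS : ∀ k j, φ k (S j) = if k = j then 1 else 0) :
    ¬ IsGrothendieckSpace Y := by
  intro hY
  let U : Ultrafilter ℕ := .of atTop
  have hU : (U : Filter ℕ) ≤ atTop := Ultrafilter.of_le atTop
  set f : ℕ → StrongDual ℝ Y := fun m => ∑ k ∈ range m, φ k with hf
  have hf_apply : ∀ m y, f m y = ∑ k ∈ range m, φ k y := fun m y => by simp [hf]
  have hf_norm : ∀ m, ‖f m‖ ≤ 1 := fun m => ContinuousLinearMap.opNorm_le_bound _ zero_le_one
    fun y => by
      rw [one_mul, hf_apply, Real.norm_eq_abs]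
      exact (abs_sum_le_sum_abs _ _).trans (hφ y m)
  have hf_tendsto : ∀ y, Tendsto (fun m => f m y) atTop (𝓝 (∑' k, φ k y)) := fun y => by
    simpa only [hf_apply] using
      (summable_of_sum_range_le (fun _ => abs_nonneg _) (hφ y)).of_abs.hasSum.tendsto_sum_nat
  obtain ⟨g, hg⟩ := StrongDual.exists_tendsto_ultrafilter_of_eventually_norm_le U
    (.of_forall hf_norm)
  have hg_apply : ∀ y, g y = ∑' k, φ k y := fun y =>
    tendsto_nhds_unique (hg y) ((hf_tendsto y).mono_left hU)
  obtain ⟨Φ, hΦ⟩ := StrongDual.exists_tendsto_ultrafilter_of_eventually_norm_le U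
    (u := fun j => NormedSpace.inclusionInDoubleDual ℝ Y (S j))
    (.of_forall fun j => (NormedSpace.double_dual_bound ℝ Y (S j)).trans (hS j))
  have hΦf : ∀ m, Φ (f m) = 0 := fun m => by
    refine tendsto_nhds_unique (hΦ (f m)) (tendsto_const_nhds.congr' ?_)
    filter_upwards [(eventually_ge_atTop m).filter_mono hU] with j hj
    rw [NormedSpace.dual_def, hf_apply, sum_eq_zero fun k hk => ?_]
    rw [hφS, if_neg (by have := mem_range.mp hk; omega)]
  have hΦg : Φ g = 1 := by
    refine tendsto_nhds_unique (hΦ g) (tendsto_const_nhds.congr fun j => ?_)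
    rw [NormedSpace.dual_def, hg_apply]
    simp_rw [hφS]
    exact (tsum_ite_eq j 1).symm
  have := hY f g (fun y => by simpa only [hg_apply] using hf_tendsto y) Φ
  simp only [hΦf, hΦg] at this
  exact zero_ne_one (tendsto_nhds_unique tendsto_const_nhds this)

theorem not_isGrothendieckSpace_of_entries {Y : Type*} [NormedAddCommGroup Y] [NormedSpace ℝ Y]
    (a : ℕ → ℕ → StrongDual ℝ Y) (S : ℕ → Y)
    (ha : ∀ y n K, K ≤ n + 1 → ∑ k ∈ range K, |a n k y| ≤ ‖y‖) (hS : ∀ j, ‖S j‖ ≤ 1)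
    (haS : ∀ n k j, k ≤ n → j ≤ n → a n k (S j) = if k = j then 1 else 0) :
    ¬ IsGrothendieckSpace Y := by
  let U : Ultrafilter ℕ := .of atTop
  have hU : (U : Filter ℕ) ≤ atTop := Ultrafilter.of_le atTop
  have ha_norm : ∀ k, ∀ᶠ n in U, ‖a n k‖ ≤ 1 := fun k => by
    filter_upwards [(eventually_ge_atTop k).filter_mono hU] with n hn
    refine ContinuousLinearMap.opNorm_le_bound _ zero_le_one fun y => ?_
    calc ‖a n k y‖ ≤ ∑ i ∈ range (k + 1), |a n i y| :=
          single_le_sum (f := fun i => |a n i y|) (fun _ _ => abs_nonneg _) (self_mem_range_succ k)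
      _ ≤ 1 * ‖y‖ := by rw [one_mul]; exact ha y n (k + 1) (by omega)
  choose φ hφ using fun k =>
    StrongDual.exists_tendsto_ultrafilter_of_eventually_norm_le U (ha_norm k)
  refine not_isGrothendieckSpace_of_summable_biorthogonal φ S (fun y K => ?_) hS fun k j => ?_
  · refine le_of_tendsto (tendsto_finsetSum _ fun k _ => (hφ k y).abs) ?_
    filter_upwards [(eventually_ge_atTop K).filter_mono hU] with n hn
    exact ha y n K (by omega)
  · refine tendsto_nhds_unique (hφ k (S j)) (tendsto_const_nhds.congr' ?_)
    filter_upwards [(eventually_ge_atTop (max k j)).filter_mono hU] with n hn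
    exact (haS n k j (by omega) (by omega)).symm

section Diagonal

variable {α 𝕜 : Type*} [NontriviallyNormedField 𝕜] {E F : α → Type*}
  [∀ i, NormedAddCommGroup (E i)] [∀ i, NormedSpace 𝕜 (E i)]
  [∀ i, NormedAddCommGroup (F i)] [∀ i, NormedSpace 𝕜 (F i)] {p : ℝ≥0∞} [Fact (1 ≤ p)]

noncomputable def lp.diagonalCLM (L : ∀ i, E i →L[𝕜] F i) (hL : ∀ i, ‖L i‖ ≤ 1) :
    lp E p →L[𝕜] lp F p :=
  LinearMap.mkContinuous
    { toFun x := ⟨fun i => L i (x i),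
        (lp.memℓp x).mono' fun i => by simpa using (L i).le_of_opNorm_le (hL i) (x i)⟩
      map_add' x y := by ext i; exact map_add (L i) (x i) (y i)
      map_smul' c x := by ext i; exact map_smul (L i) c (x i) }
    1 fun x => by
      rw [one_mul]
      exact lp.norm_mono (zero_lt_one.trans_le Fact.out).ne' fun i => by
        simpa using (L i).le_of_opNorm_le (hL i) (x i)

@[simp]
theorem lp.diagonalCLM_apply (L : ∀ i, E i →L[𝕜] F i) (hL : ∀ i, ‖L i‖ ≤ 1) (x : lp E p)
    (i : α) : lp.diagonalCLM L hL x i = L i (x i) := rfl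

theorem lp.norm_diagonalCLM_le (L : ∀ i, E i →L[𝕜] F i) (hL : ∀ i, ‖L i‖ ≤ 1) :
    ‖(lp.diagonalCLM L hL : lp E p →L[𝕜] lp F p)‖ ≤ 1 :=
  LinearMap.mkContinuous_norm_le _ zero_le_one _

theorem lp.norm_apply_single_le [DecidableEq α] (T : lp E p →L[𝕜] lp F p) (n m : α) (x : E n) :
    ‖T (lp.single p n x) m‖ ≤ ‖T‖ * ‖x‖ :=
  calc ‖T (lp.single p n x) m‖ ≤ ‖T (lp.single p n x)‖ :=
        lp.norm_apply_le_norm (zero_lt_one.trans_le Fact.out).ne' _ m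
    _ ≤ ‖T‖ * ‖lp.single p n x‖ := T.le_opNorm _
    _ = ‖T‖ * ‖x‖ := by rw [lp.norm_single (zero_lt_one.trans_le Fact.out)]

end Diagonal

theorem PiLp.norm_proj_smulRight_single_le {ι : Type*} [Fintype ι] [DecidableEq ι] (q : ℝ≥0∞)
    [Fact (1 ≤ q)] (i j : ι) :
    ‖(PiLp.proj (𝕜 := ℝ) q (fun _ : ι => ℝ) i).smulRight
      (PiLp.single q j 1 : PiLp q (fun _ : ι => ℝ))‖ ≤ 1 := by
  rw [ContinuousLinearMap.norm_smulRight_apply, PiLp.norm_single, norm_one, mul_one]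
  exact ContinuousLinearMap.opNorm_le_bound _ zero_le_one fun x => by
    simpa using PiLp.norm_apply_le x i

theorem PiLp.sum_abs_apply_single_le_norm {ι : Type*} [Fintype ι] [DecidableEq ι]
    (ψ : StrongDual ℝ (PiLp ∞ (fun _ : ι => ℝ))) :
    ∑ i, |ψ (PiLp.single ∞ i 1)| ≤ ‖ψ‖ := by
  set w : PiLp ∞ (fun _ : ι => ℝ) :=
    WithLp.toLp ∞ fun i => SignType.sign (ψ (PiLp.single ∞ i 1))
  have hw : ‖w‖ ≤ 1 := by
    rw [PiLp.norm_eq_ciSup]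
    refine Real.iSup_le (fun i => ?_) zero_le_one
    rcases lt_trichotomy (ψ (PiLp.single ∞ i 1)) 0 with h | h | h <;> simp [w, h]
  have hψw : ψ w = ∑ i, |ψ (PiLp.single ∞ i 1)| := by
    conv_lhs => rw [← (PiLp.basisFun ∞ ℝ ι).sum_repr w]
    simp [w, map_sum, sign_mul_self]
  calc ∑ i, |ψ (PiLp.single ∞ i 1)| = ψ w := hψw.symm
    _ ≤ ‖ψ w‖ := Real.le_norm_self _
    _ ≤ ‖ψ‖ * ‖w‖ := ψ.le_opNorm w
    _ ≤ ‖ψ‖ := mul_le_of_le_one_right (norm_nonneg _) hw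

theorem sum_range_natCast_le_sum {M : Type*} [AddCommMonoid M] [PartialOrder M]
    [IsOrderedAddMonoid M] {n K : ℕ} (f : Fin (n + 1) → M) (hf : ∀ i, 0 ≤ f i)
    (hK : K ≤ n + 1) : ∑ k ∈ range K, f k ≤ ∑ i, f i := by
  calc ∑ k ∈ range K, f k ≤ ∑ k ∈ range (n + 1), f k :=
        sum_le_sum_of_subset_of_nonneg (range_subset_range.mpr hK) fun _ _ _ => hf _
    _ = ∑ i, f i := by simp [← Fin.sum_univ_eq_sum_range]

theorem Fin.natCast_inj_of_le {n k j : ℕ} (hk : k ≤ n) (hj : j ≤ n) :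
    (k : Fin (n + 1)) = j ↔ k = j := by
  rw [Fin.ext_iff, Fin.val_cast_of_lt (by omega), Fin.val_cast_of_lt (by omega)]

abbrev BlockSum (p q : ℝ≥0∞) [Fact (1 ≤ q)] : Type :=
  lp (fun n : ℕ => PiLp q (fun _ : Fin (n + 1) => ℝ)) p

section BlockSum

variable (p : ℝ≥0∞) [Fact (1 ≤ p)]

-- Indices are natural numbers cast into `Fin (n + 1)`, hence taken modulo `n + 1` in block `n`.
noncomputable def blockShift (q : ℝ≥0∞) [Fact (1 ≤ q)] (u v : ℕ) :
    BlockSum p q →L[ℝ] BlockSum p q :=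
  lp.diagonalCLM (fun n => (PiLp.proj (𝕜 := ℝ) q (fun _ : Fin (n + 1) => ℝ) u).smulRight
      (PiLp.single q (v : Fin (n + 1)) 1 : PiLp q (fun _ : Fin (n + 1) => ℝ)))
    fun _ => PiLp.norm_proj_smulRight_single_le q _ _

noncomputable def matrixEntry (q : ℝ≥0∞) [Fact (1 ≤ q)] (n i k : ℕ) :
    StrongDual ℝ (BlockSum p q →L[ℝ] BlockSum p q) :=
  (PiLp.proj q (fun _ : Fin (n + 1) => ℝ) (i : Fin (n + 1)) ∘L
      lp.evalCLM ℝ (fun n : ℕ => PiLp q (fun _ : Fin (n + 1) => ℝ)) p n) ∘L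
    ContinuousLinearMap.apply ℝ (BlockSum p q)
      (lp.single p n (PiLp.single q (k : Fin (n + 1)) 1 : PiLp q (fun _ : Fin (n + 1) => ℝ)))

theorem matrixEntry_apply (q : ℝ≥0∞) [Fact (1 ≤ q)] (n i k : ℕ)
    (T : BlockSum p q →L[ℝ] BlockSum p q) :
    matrixEntry p q n i k T =
      T (lp.single p n (PiLp.single q (k : Fin (n + 1)) 1 : PiLp q (fun _ : Fin (n + 1) => ℝ)))
        n i := rfl

theorem matrixEntry_blockShift (q : ℝ≥0∞) [Fact (1 ≤ q)] {n i k u v : ℕ} (hi : i ≤ n)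
    (hk : k ≤ n) (hu : u ≤ n) (hv : v ≤ n) :
    matrixEntry p q n i k (blockShift p q u v) = if u = k ∧ i = v then 1 else 0 := by
  simp [matrixEntry_apply, blockShift, Fin.natCast_inj_of_le, ite_and,
    apply_ite (fun x : PiLp q _ => x _), *]

theorem sum_abs_matrixEntry_le_of_one (T : BlockSum p 1 →L[ℝ] BlockSum p 1) {n K : ℕ}
    (hK : K ≤ n + 1) : ∑ k ∈ range K, |matrixEntry p 1 n k 0 T| ≤ ‖T‖ := by
  set e : PiLp 1 (fun _ : Fin (n + 1) => ℝ) := PiLp.single 1 0 1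
  set v := T (lp.single p n e) n
  calc ∑ k ∈ range K, |matrixEntry p 1 n k 0 T| = ∑ k ∈ range K, ‖v k‖ := rfl
    _ ≤ ∑ i, ‖v i‖ := sum_range_natCast_le_sum (fun i => ‖v i‖) (fun _ => norm_nonneg _) hK
    _ = ‖v‖ := (PiLp.norm_eq_of_L1 v).symm
    _ ≤ ‖T‖ * ‖e‖ := lp.norm_apply_single_le T n n e
    _ = ‖T‖ := by simp [e]

theorem sum_abs_matrixEntry_le_of_top (T : BlockSum p ∞ →L[ℝ] BlockSum p ∞) {n K : ℕ}
    (hK : K ≤ n + 1) : ∑ k ∈ range K, |matrixEntry p ∞ n 0 k T| ≤ ‖T‖ := by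
  set ψ : StrongDual ℝ (PiLp ∞ (fun _ : Fin (n + 1) => ℝ)) :=
    PiLp.proj ∞ _ 0 ∘L lp.evalCLM ℝ _ p n ∘L T ∘L
      lp.singleContinuousLinearMap ℝ (fun n : ℕ => PiLp ∞ (fun _ : Fin (n + 1) => ℝ)) p n
  have hψ : ‖ψ‖ ≤ ‖T‖ := ψ.opNorm_le_bound (norm_nonneg T) fun x =>
    (PiLp.norm_apply_le _ _).trans (lp.norm_apply_single_le T n n x)
  calc ∑ k ∈ range K, |matrixEntry p ∞ n 0 k T| = ∑ k ∈ range K, |ψ (PiLp.single ∞ k 1)| := rfl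
    _ ≤ ∑ i, |ψ (PiLp.single ∞ i 1)| :=
      sum_range_natCast_le_sum (fun i => |ψ (PiLp.single ∞ i 1)|) (fun _ => abs_nonneg _) hK
    _ ≤ ‖T‖ := (PiLp.sum_abs_apply_single_le_norm ψ).trans hψ

theorem not_isGrothendieckSpace_blockSum_one :
    ¬ IsGrothendieckSpace (BlockSum p 1 →L[ℝ] BlockSum p 1) :=
  not_isGrothendieckSpace_of_entries (fun n k => matrixEntry p 1 n k 0) (blockShift p 1 0)
    (fun T _ _ hK => sum_abs_matrixEntry_le_of_one p T hK) (fun _ => lp.norm_diagonalCLM_le _ _)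
    fun n _ _ hk hj => by
      rw [matrixEntry_blockShift p 1 hk n.zero_le n.zero_le hj]
      simp

theorem not_isGrothendieckSpace_blockSum_top :
    ¬ IsGrothendieckSpace (BlockSum p ∞ →L[ℝ] BlockSum p ∞) :=
  not_isGrothendieckSpace_of_entries (fun n k => matrixEntry p ∞ n 0 k) (blockShift p ∞ · 0)
    (fun T _ _ hK => sum_abs_matrixEntry_le_of_top p T hK) (fun _ => lp.norm_diagonalCLM_le _ _)
    fun n _ _ hk hj => by
      rw [matrixEntry_blockShift p ∞ n.zero_le hk hj n.zero_le]
      simp [eq_comm]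

end BlockSum

theorem stmt_0_general (p q : ℝ≥0∞) (hq : q = 1 ∨ q = ⊤)
    [Fact (1 ≤ p)] [Fact (1 ≤ q)] :
    ¬ IsGrothendieckSpace
      ((lp (fun n : ℕ => PiLp q (fun _ : Fin (n + 1) => ℝ)) p) →L[ℝ]
        (lp (fun n : ℕ => PiLp q (fun _ : Fin (n + 1) => ℝ)) p)) := by
  rcases hq with rfl | rfl
  · exact not_isGrothendieckSpace_blockSum_one p
  · exact not_isGrothendieckSpace_blockSum_top p

/-- Let `1 < p < ∞` and let `q = 1` or `q = ∞`.  Then the Banach algebra `B(X)` of all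
bounded linear operators on `X = (⊕_{n∈ℕ} ℓ_q^n)_{ℓ_p}` is not a Grothendieck space. -/
theorem stmt_0 (p q : ℝ≥0∞) (hp1 : 1 < p) (hp2 : p < ⊤) (hq : q = 1 ∨ q = ⊤)
    [Fact (1 ≤ p)] [Fact (1 ≤ q)] :
    ¬ IsGrothendieckSpace
      ((lp (fun n : ℕ => PiLp q (fun _ : Fin (n + 1) => ℝ)) p) →L[ℝ]
        (lp (fun n : ℕ => PiLp q (fun _ : Fin (n + 1) => ℝ)) p)) :=
  stmt_0_general p q hq
end

section
/- The Banach space (⊕_{n∈ℕ} ℓ_1^n)_{ℓ∞} contains a complemented copy of ℓ_1, i.e., there exist bounded linear operators U : (⊕_{n∈ℕ} ℓ_1^n)_{ℓ∞} → ℓ_1 and V : ℓ_1 → (⊕_{n∈ℕ} ℓ_1^n)_{ℓ∞} with U ∘ V = id. -/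
/-!
Truncating `x ∈ ℓ₁` to its first `n + 1` coordinates in the `n`-th block embeds `ℓ₁`
isometrically. A left inverse is obtained coordinatewise: send `y` to the sequence whose
`k`-th term is the limit, along a free ultrafilter, of the `k`-th coordinates of the blocks
`y n`. These limits exist by compactness of bounded sets of reals and are linear in `y`;
any finite set of them has `ℓ₁`-sum at most `‖y‖`, because each block does. On a truncated
sequence the `k`-th coordinate is eventually `x k`, so the limit returns `x`.
-/

open scoped ENNReal
open Filter Topology

theorem Ultrafilter.tendsto_limUnder_of_isBounded {α β : Type*} [PseudoMetricSpace β]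
    [ProperSpace β] [Nonempty β] (𝒰 : Ultrafilter α) {f : α → β}
    (hf : Bornology.IsBounded (Set.range f)) :
    Tendsto f 𝒰 (𝓝 (limUnder (𝒰 : Filter α) f)) := by
  obtain ⟨b, -, hb⟩ := hf.isCompact_closure.ultrafilter_le_nhds' (𝒰.map f)
    (mem_map.2 (univ_mem' fun a => subset_closure (Set.mem_range_self a)))
  exact tendsto_nhds_limUnder ⟨b, hb⟩

theorem PiLp.sum_norm_dite_lt_le_norm {E : Type*} [NormedAddCommGroup E] {m : ℕ}
    (f : PiLp 1 (fun _ : Fin m => E)) (s : Finset ℕ) :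
    ∑ k ∈ s, ‖if h : k < m then f ⟨k, h⟩ else 0‖ ≤ ‖f‖ := by
  classical
  calc ∑ k ∈ s, ‖if h : k < m then f ⟨k, h⟩ else 0‖
      = ∑ k ∈ s.filter (· < m), ‖if h : k < m then f ⟨k, h⟩ else 0‖ :=
        (Finset.sum_filter_of_ne fun k _ hk => by contrapose! hk; simp [hk]).symm
    _ ≤ ∑ k ∈ Finset.range m, ‖if h : k < m then f ⟨k, h⟩ else 0‖ :=
        Finset.sum_le_sum_of_subset_of_nonneg
          (fun k hk => by simpa using (Finset.mem_filter.1 hk).2) fun _ _ _ => norm_nonneg _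
    _ = ‖f‖ := by
        rw [PiLp.norm_eq_of_L1, ← Fin.sum_univ_eq_sum_range]
        simp

theorem lp.sum_norm_le_norm_of_one {α : Type*} {E : α → Type*}
    [∀ i, NormedAddCommGroup (E i)] (f : lp E 1) (s : Finset α) : ∑ i ∈ s, ‖f i‖ ≤ ‖f‖ := by
  simpa using lp.sum_rpow_le_norm_rpow (by norm_num : 0 < (1 : ℝ≥0∞).toReal) f s

noncomputable section

/-- The space `(⊕ₙ ℓ₁^{d n})_{ℓ∞}`. -/
abbrev BlockL1 (d : ℕ → ℕ) := lp (fun n => PiLp 1 (fun _ : Fin (d n) => ℝ)) ∞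

namespace BlockL1

variable {d : ℕ → ℕ}

def coord (y : BlockL1 d) (k n : ℕ) : ℝ := if h : k < d n then y n ⟨k, h⟩ else 0

theorem sum_norm_coord_le (y : BlockL1 d) (s : Finset ℕ) (n : ℕ) :
    ∑ k ∈ s, ‖coord y k n‖ ≤ ‖y‖ :=
  (PiLp.sum_norm_dite_lt_le_norm (y n) s).trans (lp.norm_apply_le_norm ENNReal.top_ne_zero y n)

theorem isBounded_range_coord (y : BlockL1 d) (k : ℕ) :
    Bornology.IsBounded (Set.range (coord y k)) :=
  isBounded_iff_forall_norm_le.2 ⟨‖y‖, by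
    rintro _ ⟨n, rfl⟩
    simpa using sum_norm_coord_le y {k} n⟩

theorem coord_add (y z : BlockL1 d) (k n : ℕ) :
    coord (y + z) k n = coord y k n + coord z k n := by
  unfold coord; split_ifs <;> simp

theorem coord_smul (c : ℝ) (y : BlockL1 d) (k n : ℕ) : coord (c • y) k n = c * coord y k n := by
  unfold coord; split_ifs <;> simp

variable (𝒰 : Ultrafilter ℕ)

def limCoord (y : BlockL1 d) (k : ℕ) : ℝ := limUnder (𝒰 : Filter ℕ) (coord y k)

theorem tendsto_limCoord (y : BlockL1 d) (k : ℕ) :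
    Tendsto (coord y k) 𝒰 (𝓝 (limCoord 𝒰 y k)) :=
  𝒰.tendsto_limUnder_of_isBounded (isBounded_range_coord y k)

theorem sum_norm_limCoord_le (y : BlockL1 d) (s : Finset ℕ) :
    ∑ k ∈ s, ‖limCoord 𝒰 y k‖ ≤ ‖y‖ :=
  le_of_tendsto (tendsto_finsetSum s fun k _ => (tendsto_limCoord 𝒰 y k).norm)
    (Eventually.of_forall (sum_norm_coord_le y s))

def limOfBlocks : BlockL1 d →L[ℝ] lp (fun _ : ℕ => ℝ) 1 :=
  LinearMap.mkContinuous
    { toFun y := ⟨limCoord 𝒰 y, memℓp_gen' (C := ‖y‖) (by simpa using sum_norm_limCoord_le 𝒰 y)⟩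
      map_add' y z := by
        ext k
        exact ((tendsto_limCoord 𝒰 y k).add (tendsto_limCoord 𝒰 z k)
          |>.congr fun n => (coord_add y z k n).symm).limUnder_eq
      map_smul' c y := by
        ext k
        exact ((tendsto_limCoord 𝒰 y k).const_mul c
          |>.congr fun n => (coord_smul c y k n).symm).limUnder_eq }
    1 fun y => by
      simpa using lp.norm_le_of_forall_sum_le (by norm_num) (norm_nonneg y)
        (by simpa using sum_norm_limCoord_le 𝒰 y)

def truncate (x : lp (fun _ : ℕ => ℝ) 1) (m : ℕ) : PiLp 1 (fun _ : Fin m => ℝ) :=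
  WithLp.toLp 1 fun k => x k

theorem norm_truncate_le (x : lp (fun _ : ℕ => ℝ) 1) (m : ℕ) : ‖truncate x m‖ ≤ ‖x‖ :=
  calc ‖truncate x m‖ = ∑ k : Fin m, ‖x k‖ := PiLp.norm_eq_of_L1 _
    _ = ∑ k ∈ Finset.range m, ‖x k‖ := Fin.sum_univ_eq_sum_range (fun k => ‖x k‖) m
    _ ≤ ‖x‖ := lp.sum_norm_le_norm_of_one x _

def truncations : lp (fun _ : ℕ => ℝ) 1 →L[ℝ] BlockL1 d :=
  LinearMap.mkContinuous
    { toFun x := ⟨fun n => truncate x (d n), memℓp_infty ⟨‖x‖, by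
        rintro _ ⟨n, rfl⟩
        exact norm_truncate_le x (d n)⟩⟩
      map_add' _ _ := rfl
      map_smul' _ _ := rfl }
    1 fun x => by
      simpa using lp.norm_le_of_forall_le (norm_nonneg x) fun n => norm_truncate_le x (d n)

theorem limOfBlocks_comp_truncations (h𝒰 : (𝒰 : Filter ℕ) ≤ atTop)
    (hd : Tendsto d atTop atTop) :
    (limOfBlocks (d := d) 𝒰).comp truncations =
      ContinuousLinearMap.id ℝ (lp (fun _ : ℕ => ℝ) 1) := by
  ext x k
  have hcoord : coord (truncations (d := d) x) k =ᶠ[atTop] fun _ => x k := by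
    filter_upwards [hd.eventually_gt_atTop k] with n hn
    simp [coord, hn, truncations, truncate]
  exact (tendsto_const_nhds.congr' (EventuallyEq.symm (h𝒰 hcoord))).limUnder_eq

end BlockL1

end

/-- The Banach space `(⊕_{n∈ℕ} ℓ_1^n)_{ℓ∞}` contains a complemented copy of `ℓ_1`:
there exist bounded linear operators `U` and `V` with `U ∘ V = id`. -/
theorem stmt_1 :
    ∃ (U : (lp (fun n : ℕ => PiLp 1 (fun _ : Fin (n + 1) => ℝ)) ⊤) →L[ℝ]
            (lp (fun _ : ℕ => ℝ) 1))
      (V : (lp (fun _ : ℕ => ℝ) 1) →L[ℝ]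
            (lp (fun n : ℕ => PiLp 1 (fun _ : Fin (n + 1) => ℝ)) ⊤)),
      U.comp V = ContinuousLinearMap.id ℝ (lp (fun _ : ℕ => ℝ) 1) := by
  obtain ⟨𝒰, h𝒰⟩ := Ultrafilter.exists_le (atTop : Filter ℕ)
  exact ⟨_, _, BlockL1.limOfBlocks_comp_truncations 𝒰 h𝒰 (tendsto_add_atTop_nat 1)⟩
end

section
/- If a Banach space X contains a complemented copy of (⊕_{n∈ℕ} ℓ_1^n)_{ℓ∞}, then X is not a Grothendieck space. -/
open Filter Topology Bornology Set NormedSpace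

theorem ContinuousLinearMap.exists_tendsto_ultrafilter {α 𝕜 𝕜₂ E F : Type*}
    [NontriviallyNormedField 𝕜] [NontriviallyNormedField 𝕜₂] {σ : 𝕜 →+* 𝕜₂} [RingHomIsometric σ]
    [SeminormedAddCommGroup E] [NormedSpace 𝕜 E] [NormedAddCommGroup F] [NormedSpace 𝕜₂ F]
    [ProperSpace F] (𝒰 : Ultrafilter α) (g : α → E →SL[σ] F) (hg : IsBounded (range g)) :
    ∃ L : E →SL[σ] F, ∀ x, Tendsto (fun a => g a x) 𝒰 (𝓝 (L x)) := by
  obtain ⟨f, -, hf⟩ := (isCompact_closure_image_coe_of_bounded hg).ultrafilter_le_nhds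
    (𝒰.map fun a => ⇑(g a)) (le_principal_iff.2 <| mem_map.2 <|
      univ_mem' fun a => subset_closure ⟨g a, mem_range_self a, rfl⟩)
  exact ⟨.ofTendstoOfBoundedRange f g hf hg, tendsto_pi_nhds.1 hf⟩

theorem hyperfilter_nat_le_atTop : (hyperfilter ℕ : Filter ℕ) ≤ atTop :=
  Nat.cofinite_eq_atTop ▸ hyperfilter_le_cofinite

theorem not_isGrothendieckSpace_of_summable_biorthogonal_s2 {X : Type*} [NormedAddCommGroup X]
    [NormedSpace ℝ X] [CompleteSpace X] (ψ : ℕ → StrongDual ℝ X)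
    (hψ : ∀ x, Summable fun j => ψ j x) (e : ℕ → X) (C : ℝ) (he : ∀ m, ‖e m‖ ≤ C)
    (hψe : ∀ j m, ψ j (e m) = if j = m then 1 else 0) :
    ¬ IsGrothendieckSpace X := by
  intro hX
  set φ : ℕ → StrongDual ℝ X := fun k => ∑ j ∈ Finset.range k, ψ j
  have hφ : Tendsto (fun k x => φ k x) atTop (𝓝 fun x => ∑' j, ψ j x) :=
    tendsto_pi_nhds.2 fun x => by simpa [φ] using (hψ x).hasSum.tendsto_sum_nat
  set γ := continuousLinearMapOfTendsto φ hφ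
  obtain ⟨Φ, hΦ⟩ := ContinuousLinearMap.exists_tendsto_ultrafilter (hyperfilter ℕ)
    (fun m => inclusionInDoubleDual ℝ X (e m))
    (isBounded_iff_forall_norm_le.2 ⟨C, forall_mem_range.2 fun m =>
      (double_dual_bound ℝ X (e m)).trans (he m)⟩)
  have hΦφ (k : ℕ) : Φ (φ k) = 0 := by
    refine tendsto_nhds_unique (hΦ (φ k)) (tendsto_const_nhds.congr' ?_)
    filter_upwards [hyperfilter_nat_le_atTop (eventually_ge_atTop k)] with m hm
    simpa [φ, hψe] using hm
  have hΦγ : Φ γ = 1 := by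
    refine tendsto_nhds_unique (hΦ γ) (tendsto_const_nhds.congr fun m => ?_)
    simp [γ, continuousLinearMapOfTendsto, hψe]
  have := hX φ γ (fun x => tendsto_pi_nhds.1 hφ x) Φ
  simp only [hΦφ, hΦγ] at this
  exact zero_ne_one (tendsto_nhds_unique tendsto_const_nhds this)

noncomputable abbrev BlockL1Sum := lp (fun n : ℕ => PiLp 1 (fun _ : Fin (n + 1) => ℝ)) ⊤

namespace BlockL1Sum

-- Coordinate `j` of block `n`, clamped to the last coordinate when `j > n`; only blocks with
-- `n ≥ j` matter along a free ultrafilter, and the clamp avoids a dependent `if`.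
noncomputable def coord (j n : ℕ) : StrongDual ℝ BlockL1Sum :=
  (PiLp.proj 1 (fun _ => ℝ) (Fin.clamp j n)).comp (lp.evalCLM ℝ _ ⊤ n)

theorem coord_apply (j n : ℕ) (y : BlockL1Sum) : coord j n y = y n (Fin.clamp j n) := rfl

theorem sum_abs_coord_le (y : BlockL1Sum) {m n : ℕ} (hmn : m ≤ n + 1) :
    ∑ j ∈ Finset.range m, |coord j n y| ≤ ‖y‖ := by
  have hinj : InjOn (Fin.clamp · n) (Finset.range m) := fun i hi j hj hij => by
    simp only [Finset.coe_range, mem_Iio] at hi hj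
    simpa [Fin.clamp, Fin.ext_iff, Nat.min_eq_left (by omega : i ≤ n),
      Nat.min_eq_left (by omega : j ≤ n)] using hij
  calc ∑ j ∈ Finset.range m, |coord j n y|
      = ∑ i ∈ (Finset.range m).image (Fin.clamp · n), ‖y n i‖ := by
        rw [Finset.sum_image hinj]; rfl
    _ ≤ ∑ i, ‖y n i‖ := Finset.sum_le_univ_sum_of_nonneg fun _ => norm_nonneg _
    _ = ‖y n‖ := (PiLp.norm_eq_of_L1 _).symm
    _ ≤ ‖y‖ := lp.norm_apply_le_norm ENNReal.top_ne_zero y n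

theorem norm_coord_le (j n : ℕ) : ‖coord j n‖ ≤ 1 :=
  ContinuousLinearMap.opNorm_le_bound _ zero_le_one fun y => by
    rw [one_mul]
    exact (PiLp.norm_apply_le _ _).trans (lp.norm_apply_le_norm ENNReal.top_ne_zero y n)

noncomputable def unitLift (m : ℕ) : BlockL1Sum :=
  ⟨fun n => PiLp.single 1 (Fin.clamp m n) 1, memℓp_infty ⟨1, by
    rintro _ ⟨n, rfl⟩
    simp⟩⟩

theorem norm_unitLift_le (m : ℕ) : ‖unitLift m‖ ≤ 1 :=
  lp.norm_le_of_forall_le zero_le_one fun n => by simp [unitLift]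

theorem coord_unitLift {j m n : ℕ} (hj : j ≤ n) (hm : m ≤ n) :
    coord j n (unitLift m) = if j = m then 1 else 0 := by
  simp [coord_apply, unitLift, PiLp.single_apply, Fin.clamp, Fin.ext_iff,
    Nat.min_eq_left hj, Nat.min_eq_left hm]

theorem exists_summable_biorthogonal : ∃ ψ : ℕ → StrongDual ℝ BlockL1Sum,
    (∀ y, Summable fun j => ψ j y) ∧ ∀ j m, ψ j (unitLift m) = if j = m then 1 else 0 := by
  choose ψ hψ using fun j => ContinuousLinearMap.exists_tendsto_ultrafilter (hyperfilter ℕ)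
    (coord j) (isBounded_iff_forall_norm_le.2 ⟨1, forall_mem_range.2 (norm_coord_le j)⟩)
  refine ⟨ψ, fun y => ?_, fun j m => ?_⟩
  · refine (summable_of_sum_range_le (c := ‖y‖) (fun _ => abs_nonneg _) fun m => ?_).of_abs
    refine le_of_tendsto (tendsto_finsetSum _ fun j _ => (hψ j y).abs) ?_
    filter_upwards [hyperfilter_nat_le_atTop (eventually_ge_atTop m)] with n hn
    exact sum_abs_coord_le y (by omega)
  · refine tendsto_nhds_unique (hψ j _) (tendsto_const_nhds.congr' ?_)
    filter_upwards [hyperfilter_nat_le_atTop (eventually_ge_atTop (max j m))] with n hn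
    exact (coord_unitLift (le_of_max_le_left hn) (le_of_max_le_right hn)).symm

end BlockL1Sum

/-- If a Banach space `X` contains a complemented copy of `(⊕_{n∈ℕ} ℓ_1^n)_{ℓ∞}`,
then `X` is not a Grothendieck space. -/
theorem stmt_2 (X : Type*) [NormedAddCommGroup X] [NormedSpace ℝ X] [CompleteSpace X]
    (U : X →L[ℝ] (lp (fun n : ℕ => PiLp 1 (fun _ : Fin (n + 1) => ℝ)) ⊤))
    (V : (lp (fun n : ℕ => PiLp 1 (fun _ : Fin (n + 1) => ℝ)) ⊤) →L[ℝ] X)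
    (hUV : U.comp V =
      ContinuousLinearMap.id ℝ (lp (fun n : ℕ => PiLp 1 (fun _ : Fin (n + 1) => ℝ)) ⊤)) :
    ¬ IsGrothendieckSpace X := by
  obtain ⟨ψ, hψ, hψe⟩ := BlockL1Sum.exists_summable_biorthogonal
  refine not_isGrothendieckSpace_of_summable_biorthogonal_s2 (fun j => (ψ j).comp U)
    (fun x => hψ (U x)) (fun m => V (BlockL1Sum.unitLift m)) (‖V‖ * 1)
    (fun m => V.le_opNorm_of_le (BlockL1Sum.norm_unitLift_le m)) fun j m => ?_
  simpa using congr(ψ j ($hUV (BlockL1Sum.unitLift m))).trans (hψe j m)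
end

section
/- Let 1 ≤ p < ∞, let (X_n) be a sequence of nonzero Banach spaces, and let X = (⊕_{n∈ℕ} X_n)_{ℓ_p}. Then B(X) contains a complemented subspace which is isometrically isomorphic to (⊕_{n∈ℕ} X_n)_{ℓ∞}: there exist a linear isometry Δ : (⊕_{n∈ℕ} X_n)_{ℓ∞} → B(X) and a bounded linear map Θ : B(X) → (⊕_{n∈ℕ} X_n)_{ℓ∞} with Θ ∘ Δ = id. -/
open scoped ENNReal

/-!
Pick unit vectors `v n ∈ X n` and norm-one functionals `φ n` with `φ n (v n) = 1` (Hahn–Banach).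
Then `y ↦ (x ↦ (φ n (x n) • y n)ₙ)` is a contraction `ℓ∞ → B(ℓp)`, and reading off the `n`-th
coordinate of `S (single n (v n))` is a contraction `B(ℓp) → ℓ∞` that is left inverse to it.
A contraction with a contractive left inverse is an isometry.
-/

theorem exists_normalized_dual_pair {𝕜 F : Type*} [RCLike 𝕜] [NormedAddCommGroup F]
    [NormedSpace 𝕜 F] [Nontrivial F] :
    ∃ (v : F) (φ : StrongDual 𝕜 F), ‖v‖ = 1 ∧ ‖φ‖ = 1 ∧ φ v = 1 := by
  obtain ⟨x, hx⟩ := exists_ne (0 : F)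
  have hv : ‖(‖x‖⁻¹ : 𝕜) • x‖ = 1 := norm_smul_inv_norm hx
  obtain ⟨φ, hφ, hφv⟩ := exists_dual_vector 𝕜 ((‖x‖⁻¹ : 𝕜) • x) (by simp [hv])
  exact ⟨_, φ, hv, hφ, by rw [hφv, hv, RCLike.ofReal_one]⟩

theorem ContinuousLinearMap.norm_map_of_comp_eq_id {𝕜 F G : Type*} [NontriviallyNormedField 𝕜]
    [SeminormedAddCommGroup F] [NormedSpace 𝕜 F] [SeminormedAddCommGroup G] [NormedSpace 𝕜 G]
    {f : F →L[𝕜] G} {g : G →L[𝕜] F} (hf : ‖f‖ ≤ 1) (hg : ‖g‖ ≤ 1)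
    (hgf : g.comp f = ContinuousLinearMap.id 𝕜 F) (x : F) : ‖f x‖ = ‖x‖ := by
  refine le_antisymm (by simpa using f.le_of_opNorm_le hf x) ?_
  calc ‖x‖ = ‖g (f x)‖ := by
        rw [← ContinuousLinearMap.comp_apply, hgf, ContinuousLinearMap.id_apply]
    _ ≤ ‖f x‖ := by simpa using g.le_of_opNorm_le hg (f x)

noncomputable section

namespace lp

variable {𝕜 ι : Type*} [RCLike 𝕜] {E : ι → Type*} [∀ i, NormedAddCommGroup (E i)]
  [∀ i, NormedSpace 𝕜 (E i)] {p : ℝ≥0∞}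

theorem norm_dual_smul_le_norm_smul_apply {φ : ∀ i, StrongDual 𝕜 (E i)} (hφ : ∀ i, ‖φ i‖ ≤ 1)
    (y : lp E ∞) (x : lp E p) (i : ι) :
    ‖φ i (x i) • y i‖ ≤ ‖((‖y‖ : 𝕜) • x) i‖ := by
  rw [lp.coeFn_smul, Pi.smul_apply, norm_smul, norm_smul, RCLike.norm_ofReal, abs_norm, mul_comm]
  gcongr
  · exact lp.norm_apply_le_norm ENNReal.top_ne_zero y i
  · simpa using (φ i).le_of_opNorm_le (hφ i) (x i)

variable [Fact (1 ≤ p)]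

variable (p) in
def rankOneDiagonal (φ : ∀ i, StrongDual 𝕜 (E i)) (hφ : ∀ i, ‖φ i‖ ≤ 1) :
    lp E ∞ →L[𝕜] lp E p →L[𝕜] lp E p :=
  LinearMap.mkContinuous₂
    (LinearMap.mk₂ 𝕜
      (fun y x => ⟨fun i => φ i (x i) • y i,
        (lp.memℓp ((‖y‖ : 𝕜) • x)).mono' (norm_dual_smul_le_norm_smul_apply hφ y x)⟩)
      (fun y y' x => lp.ext <| funext fun i => smul_add _ _ _)
      (fun c y x => lp.ext <| funext fun i => smul_comm _ _ _)
      (fun y x x' => lp.ext <| funext fun i => by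
        simp only [lp.coeFn_add, Pi.add_apply, map_add, add_smul])
      (fun c y x => lp.ext <| funext fun i => by
        simp only [lp.coeFn_smul, Pi.smul_apply, map_smul, smul_eq_mul, mul_smul]))
    1 (fun y x => by
      have : ‖y‖ * ‖x‖ = ‖(‖y‖ : 𝕜) • x‖ := by rw [norm_smul, RCLike.norm_ofReal, abs_norm]
      rw [one_mul, this]
      exact lp.norm_mono (zero_lt_one.trans_le Fact.out).ne'
        (norm_dual_smul_le_norm_smul_apply hφ y x))

@[simp]
theorem rankOneDiagonal_apply_apply (φ : ∀ i, StrongDual 𝕜 (E i)) (hφ : ∀ i, ‖φ i‖ ≤ 1)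
    (y : lp E ∞) (x : lp E p) (i : ι) : rankOneDiagonal p φ hφ y x i = φ i (x i) • y i :=
  rfl

theorem norm_rankOneDiagonal_le (φ : ∀ i, StrongDual 𝕜 (E i)) (hφ : ∀ i, ‖φ i‖ ≤ 1) :
    ‖rankOneDiagonal p φ hφ‖ ≤ 1 :=
  LinearMap.mkContinuous₂_norm_le _ zero_le_one _

variable [DecidableEq ι]

theorem norm_apply_single_apply_le (S : lp E p →L[𝕜] lp E p) {i : ι} {v : E i} (hv : ‖v‖ ≤ 1) :
    ‖S (lp.single p i v) i‖ ≤ ‖S‖ :=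
  calc ‖S (lp.single p i v) i‖
      ≤ ‖S (lp.single p i v)‖ := lp.norm_apply_le_norm (zero_lt_one.trans_le Fact.out).ne' _ i
    _ ≤ ‖S‖ * ‖lp.single p i v‖ := S.le_opNorm _
    _ ≤ ‖S‖ := by
      rw [lp.norm_single (zero_lt_one.trans_le Fact.out)]
      exact mul_le_of_le_one_right (norm_nonneg S) hv

variable (𝕜 p) in
def diagonalEntries (v : ∀ i, E i) (hv : ∀ i, ‖v i‖ ≤ 1) :
    (lp E p →L[𝕜] lp E p) →L[𝕜] lp E ∞ :=
  LinearMap.mkContinuous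
    { toFun := fun S => ⟨fun i => S (lp.single p i (v i)) i,
        memℓp_infty ⟨‖S‖, Set.forall_mem_range.2 fun i => norm_apply_single_apply_le S (hv i)⟩⟩
      map_add' := fun S S' => rfl
      map_smul' := fun c S => rfl }
    1 (fun S => by
      rw [one_mul]
      exact lp.norm_le_of_forall_le (norm_nonneg S) fun i => norm_apply_single_apply_le S (hv i))

@[simp]
theorem diagonalEntries_apply (v : ∀ i, E i) (hv : ∀ i, ‖v i‖ ≤ 1) (S : lp E p →L[𝕜] lp E p)
    (i : ι) : diagonalEntries 𝕜 p v hv S i = S (lp.single p i (v i)) i :=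
  rfl

theorem norm_diagonalEntries_le (v : ∀ i, E i) (hv : ∀ i, ‖v i‖ ≤ 1) :
    ‖diagonalEntries 𝕜 p v hv‖ ≤ 1 :=
  LinearMap.mkContinuous_norm_le _ zero_le_one _

theorem diagonalEntries_comp_rankOneDiagonal {v : ∀ i, E i} (hv : ∀ i, ‖v i‖ ≤ 1)
    {φ : ∀ i, StrongDual 𝕜 (E i)} (hφ : ∀ i, ‖φ i‖ ≤ 1) (hφv : ∀ i, φ i (v i) = 1) :
    (diagonalEntries 𝕜 p v hv).comp (rankOneDiagonal p φ hφ) =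
      ContinuousLinearMap.id 𝕜 (lp E ∞) := by
  ext y i
  simp [hφv]

end lp

end

theorem stmt_6_general (p : ℝ≥0∞) [Fact (1 ≤ p)]
    (X : ℕ → Type*) [∀ n, NormedAddCommGroup (X n)] [∀ n, NormedSpace ℝ (X n)]
    (hX : ∀ n, ∃ x : X n, x ≠ 0) :
    ∃ (Δ : (lp X ⊤) →L[ℝ] ((lp X p) →L[ℝ] (lp X p)))
      (Θ : ((lp X p) →L[ℝ] (lp X p)) →L[ℝ] (lp X ⊤)),
      (∀ y : lp X ⊤, ‖Δ y‖ = ‖y‖) ∧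
      Θ.comp Δ = ContinuousLinearMap.id ℝ (lp X ⊤) := by
  have (n : ℕ) : Nontrivial (X n) := let ⟨x, hx⟩ := hX n; nontrivial_of_ne x 0 hx
  choose v φ hv hφ hφv using fun n => exists_normalized_dual_pair (𝕜 := ℝ) (F := X n)
  have hΘΔ := lp.diagonalEntries_comp_rankOneDiagonal (p := p) (hv · |>.le) (hφ · |>.le) hφv
  exact ⟨_, _, ContinuousLinearMap.norm_map_of_comp_eq_id (lp.norm_rankOneDiagonal_le _ _)
    (lp.norm_diagonalEntries_le _ _) hΘΔ, hΘΔ⟩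

/-- Let `1 ≤ p < ∞`, let `(X_n)` be a sequence of nonzero Banach spaces and let
`X = (⊕_{n∈ℕ} X_n)_{ℓ_p}`.  Then `B(X)` contains a complemented subspace isometrically
isomorphic to `(⊕_{n∈ℕ} X_n)_{ℓ∞}`: there is a linear isometry
`Δ : (⊕ X_n)_{ℓ∞} → B(X)` and a bounded linear map `Θ : B(X) → (⊕ X_n)_{ℓ∞}`
with `Θ ∘ Δ = id`. -/
theorem stmt_6 (p : ℝ≥0∞) [Fact (1 ≤ p)] (hp : p < ⊤)
    (X : ℕ → Type*) [∀ n, NormedAddCommGroup (X n)] [∀ n, NormedSpace ℝ (X n)]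
    [∀ n, CompleteSpace (X n)] (hX : ∀ n, ∃ x : X n, x ≠ 0) :
    ∃ (Δ : (lp X ⊤) →L[ℝ] ((lp X p) →L[ℝ] (lp X p)))
      (Θ : ((lp X p) →L[ℝ] (lp X p)) →L[ℝ] (lp X ⊤)),
      (∀ y : lp X ⊤, ‖Δ y‖ = ‖y‖) ∧
      Θ.comp Δ = ContinuousLinearMap.id ℝ (lp X ⊤) :=
  stmt_6_general p X hX
end

section
/- Let 1 ≤ p < ∞ and let (m_n) be an unbounded sequence of natural numbers. If a Banach space X contains a complemented copy of (⊕_{n∈ℕ} ℓ_1^{m_n})_{ℓ_p}, then B(X) is not a Grothendieck space. -/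
set_option synthInstance.maxHeartbeats 1000000
set_option maxHeartbeats 1000000

open scoped ENNReal

/-!
Let `Z` be the `ℓ_p`-sum of the blocks `ℓ₁^{m n}` and let `𝒰` be an ultrafilter along which
`m n → ∞`. Since `B(Z)` is complemented in `B(X)`, and the Grothendieck property passes to
complemented subspaces, it suffices to treat `B(Z)`. Take the `j`-th coordinate of `S e₀`, where
`e₀` is the first unit vector of block `n`, and pass to the limit along `𝒰`: this gives
functionals `a j` on `B(Z)` with `∑ j, |a j S| ≤ ‖S‖`, i.e. a bounded operator `B(Z) → ℓ₁`. The
block-diagonal contractions `D k : e₀ ↦ e_k` satisfy `a j (D k) = δ j k`. So the tails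
`f k = ∑_{j ≥ k} a j` are weak*-null, while `Φ g = lim_{k → 𝒰'} g (D k)`, for any free
ultrafilter `𝒰'`, defines an element of `B(Z)**` with `Φ (f j) = 1` for every `j`.
-/

open Filter Topology

theorem StrongDual.exists_tendsto_ultrafilter {𝕜 E ι : Type*} [NontriviallyNormedField 𝕜]
    [ProperSpace 𝕜] [SeminormedAddCommGroup E] [NormedSpace 𝕜 E] (𝒰 : Ultrafilter ι)
    (φ : ι → StrongDual 𝕜 E) {C : ℝ} (hφ : ∀ i, ‖φ i‖ ≤ C) :
    ∃ ψ : StrongDual 𝕜 E, ∀ x, Tendsto (fun i => φ i x) 𝒰 (𝓝 (ψ x)) := by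
  obtain ⟨ψ, -, hψ⟩ := (WeakDual.isCompact_closedBall (0 : StrongDual 𝕜 E) C).ultrafilter_le_nhds
    (𝒰.map (StrongDual.toWeakDual ∘ φ)) (by
      rw [Ultrafilter.coe_map, le_principal_iff]
      exact mem_map.2 (univ_mem' fun i => by simpa using hφ i))
  exact ⟨WeakDual.toStrongDual ψ, fun x => ((WeakDual.eval_continuous x).tendsto ψ).comp hψ⟩

theorem StrongDual.exists_eq_tsum {E ι : Type*} [SeminormedAddCommGroup E] [NormedSpace ℝ E]
    (a : ι → StrongDual ℝ E) {C : ℝ} (ha : ∀ x (s : Finset ι), ∑ j ∈ s, |a j x| ≤ C * ‖x‖) :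
    ∃ f : StrongDual ℝ E, ∀ x, f x = ∑' j, a j x := by
  have hsum (x : E) : Summable fun j => |a j x| :=
    summable_of_sum_le (fun _ => abs_nonneg _) (ha x)
  refine ⟨LinearMap.mkContinuous
    { toFun := fun x => ∑' j, a j x
      map_add' := fun x y => by
        simp only [map_add, ((hsum x).of_abs.tsum_add (hsum y).of_abs)]
      map_smul' := fun r x => by simp [tsum_mul_left] } C fun x => ?_, fun _ => rfl⟩
  calc ‖∑' j, a j x‖ ≤ ∑' j, |a j x| := norm_tsum_le_tsum_norm (hsum x)
    _ ≤ C * ‖x‖ := (hsum x).tsum_le_of_sum_le (ha x)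

theorem IsGrothendieckSpace.of_comp_eq_id {Y Y' : Type*} [NormedAddCommGroup Y] [NormedSpace ℝ Y]
    [NormedAddCommGroup Y'] [NormedSpace ℝ Y'] (hY : IsGrothendieckSpace Y) (P : Y →L[ℝ] Y')
    (J : Y' →L[ℝ] Y) (hPJ : P.comp J = .id ℝ Y') : IsGrothendieckSpace Y' := by
  intro f g hfg Φ
  simpa [ContinuousLinearMap.comp_assoc, hPJ] using
    hY (fun n => (f n).comp P) (g.comp P) (fun y => hfg (P y))
      (Φ.comp (ContinuousLinearMap.precomp ℝ J))

theorem IsGrothendieckSpace.continuousLinearMap_of_comp_eq_id {X Z : Type*}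
    [NormedAddCommGroup X] [NormedSpace ℝ X] [NormedAddCommGroup Z] [NormedSpace ℝ Z]
    (hX : IsGrothendieckSpace (X →L[ℝ] X)) (U : X →L[ℝ] Z) (V : Z →L[ℝ] X)
    (hUV : U.comp V = .id ℝ Z) : IsGrothendieckSpace (Z →L[ℝ] Z) := by
  have hUV' (z : Z) : U (V z) = z := by simpa using DFunLike.congr_fun hUV z
  exact hX.of_comp_eq_id ((ContinuousLinearMap.postcomp Z U).comp (ContinuousLinearMap.precomp X V))
    ((ContinuousLinearMap.postcomp X V).comp (ContinuousLinearMap.precomp Z U)) (by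
      ext S z
      exact (hUV' _).trans (congrArg S (hUV' z)))

theorem not_isGrothendieckSpace_of_biorthogonal {Y : Type*} [NormedAddCommGroup Y]
    [NormedSpace ℝ Y] (a : ℕ → StrongDual ℝ Y) {C : ℝ}
    (ha : ∀ y (s : Finset ℕ), ∑ j ∈ s, |a j y| ≤ C * ‖y‖) (W : ℕ → Y) {M : ℝ}
    (hW : ∀ k, ‖W k‖ ≤ M) (haW : ∀ j k, a j (W k) = if j = k then 1 else 0) :
    ¬ IsGrothendieckSpace Y := by
  intro hY
  choose f hf using fun k => StrongDual.exists_eq_tsum (fun j => a (j + k)) (C := C)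
    fun y s => by simpa using ha y (s.map (addRightEmbedding k))
  have hfW {j k : ℕ} (hjk : j ≤ k) : f j (W k) = 1 := by
    rw [hf, ← tsum_ite_eq (k - j) fun _ => (1 : ℝ)]
    exact tsum_congr fun i => by rw [haW]; exact if_congr (by omega) rfl rfl
  obtain ⟨Φ, hΦ⟩ := StrongDual.exists_tendsto_ultrafilter (hyperfilter ℕ)
    (fun k => NormedSpace.inclusionInDoubleDual ℝ Y (W k))
    fun k => (NormedSpace.double_dual_bound ℝ Y (W k)).trans (hW k)
  have hcof : (hyperfilter ℕ : Filter ℕ) ≤ atTop := Nat.cofinite_eq_atTop ▸ hyperfilter_le_cofinite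
  have hΦf (j : ℕ) : Φ (f j) = 1 := by
    refine tendsto_nhds_unique (hΦ (f j)) (tendsto_const_nhds.congr' ?_)
    filter_upwards [hcof (eventually_ge_atTop j)] with k hk
    exact (hfW hk).symm
  have hf0 : ∀ y, Tendsto (fun k => f k y) atTop (𝓝 0) := fun y => by
    simpa only [hf] using tendsto_sum_nat_add fun j => a j y
  simpa [hΦf] using hY f 0 (by simpa using hf0) Φ

theorem not_isGrothendieckSpace_of_tendsto_biorthogonal {Y : Type*} [NormedAddCommGroup Y]
    [NormedSpace ℝ Y] {F : Filter ℕ} [F.NeBot] (c : ℕ → ℕ → StrongDual ℝ Y) {C : ℝ}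
    (hc : ∀ n y (s : Finset ℕ), ∑ j ∈ s, |c n j y| ≤ C * ‖y‖) (W : ℕ → Y) {M : ℝ}
    (hW : ∀ k, ‖W k‖ ≤ M)
    (hcW : ∀ j k, Tendsto (fun n => c n j (W k)) F (𝓝 (if j = k then 1 else 0))) :
    ¬ IsGrothendieckSpace Y := by
  have hc_norm (n j : ℕ) : ‖c n j‖ ≤ max C 0 :=
    (c n j).opNorm_le_bound (le_max_right _ _) fun y => by
      have := hc n y {j}
      rw [Finset.sum_singleton, ← Real.norm_eq_abs] at this
      exact this.trans (by gcongr; exact le_max_left _ _)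
  choose a ha using fun j =>
    StrongDual.exists_tendsto_ultrafilter (Ultrafilter.of F) (fun n => c n j) (hc_norm · j)
  refine not_isGrothendieckSpace_of_biorthogonal a (C := C) (fun y s => ?_) W hW fun j k => ?_
  · exact le_of_tendsto (tendsto_finsetSum s fun j _ => (ha j y).abs)
      (Eventually.of_forall fun n => hc n y s)
  · exact tendsto_nhds_unique (ha j (W k)) ((hcW j k).mono_left (Ultrafilter.of_le F))

theorem not_isGrothendieckSpace_continuousLinearMap_of_eventually_biorthogonal {Z : Type*}
    [NormedAddCommGroup Z] [NormedSpace ℝ Z] {F : Filter ℕ} [F.NeBot]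
    (b : ℕ → ℕ → StrongDual ℝ Z) (hb : ∀ n z (s : Finset ℕ), ∑ j ∈ s, |b n j z| ≤ ‖z‖)
    (v : ℕ → Z) {R : ℝ} (hv : ∀ n, ‖v n‖ ≤ R) (D : ℕ → Z →L[ℝ] Z) {R' : ℝ}
    (hD : ∀ k, ‖D k‖ ≤ R')
    (hbD : ∀ k, ∀ᶠ n in F, ∀ j, b n j (D k (v n)) = if j = k then 1 else 0) :
    ¬ IsGrothendieckSpace (Z →L[ℝ] Z) := by
  refine not_isGrothendieckSpace_of_tendsto_biorthogonal (F := F)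
    (fun n j => (b n j).comp (ContinuousLinearMap.apply ℝ Z (v n))) (C := R)
    (fun n S s => ?_) D hD fun j k => tendsto_const_nhds.congr' ?_
  · calc ∑ j ∈ s, |b n j (S (v n))| ≤ ‖S (v n)‖ := hb n _ s
      _ ≤ ‖S‖ * ‖v n‖ := S.le_opNorm _
      _ ≤ R * ‖S‖ := by rw [mul_comm]; gcongr; exact hv n
  · filter_upwards [hbD k] with n hn
    exact (hn j).symm

theorem lp.exists_diagonal {ι : Type*} {E F : ι → Type*} [∀ i, NormedAddCommGroup (E i)]
    [∀ i, NormedSpace ℝ (E i)] [∀ i, NormedAddCommGroup (F i)] [∀ i, NormedSpace ℝ (F i)]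
    {p : ℝ≥0∞} [Fact (1 ≤ p)] (T : ∀ i, E i →L[ℝ] F i) {C : ℝ} (hC : 0 ≤ C)
    (hT : ∀ i, ‖T i‖ ≤ C) :
    ∃ D : lp E p →L[ℝ] lp F p, ‖D‖ ≤ C ∧ ∀ x i, D x i = T i (x i) := by
  have hp : p ≠ 0 := (zero_lt_one.trans_le Fact.out).ne'
  have hTx (x : lp E p) (i : ι) : ‖T i (x i)‖ ≤ ‖(C • x) i‖ := by
    rw [lp.coeFn_smul, Pi.smul_apply, norm_smul, Real.norm_of_nonneg hC]
    exact (T i).le_of_opNorm_le (hT i) (x i)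
  let D : lp E p →ₗ[ℝ] lp F p :=
    { toFun x := ⟨fun i => T i (x i), (lp.memℓp (C • x)).mono' (hTx x)⟩
      map_add' x y := Subtype.ext <| funext fun i => (T i).map_add _ _
      map_smul' r x := by ext i; simp }
  refine ⟨D.mkContinuous C fun x => ?_, D.mkContinuous_norm_le hC _, fun _ _ => rfl⟩
  calc ‖D x‖ ≤ ‖C • x‖ := lp.norm_mono hp (hTx x)
    _ = C * ‖x‖ := by rw [norm_smul, Real.norm_of_nonneg hC]

-- Coordinates and unit vectors of `ℓ₁^N` are indexed by `ℕ`, so that all blocks share one index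
-- set; out-of-range indices give `0`.
noncomputable def finCoord (N j : ℕ) : StrongDual ℝ (PiLp 1 fun _ : Fin N => ℝ) :=
  if h : j < N then PiLp.proj 1 _ ⟨j, h⟩ else 0

noncomputable def finBasisVec (N k : ℕ) : PiLp 1 fun _ : Fin N => ℝ :=
  if h : k < N then PiLp.single 1 ⟨k, h⟩ 1 else 0

theorem sum_abs_finCoord_le (N : ℕ) (x : PiLp 1 fun _ : Fin N => ℝ) (s : Finset ℕ) :
    ∑ j ∈ s, |finCoord N j x| ≤ ‖x‖ :=
  calc ∑ j ∈ s, |finCoord N j x| = ∑ j ∈ s with j < N, |finCoord N j x| :=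
        (Finset.sum_filter_of_ne fun j _ h => by by_contra hj; simp [finCoord, hj] at h).symm
    _ ≤ ∑ j ∈ Finset.range N, |finCoord N j x| :=
        Finset.sum_le_sum_of_subset_of_nonneg (fun j hj => by simp_all)
          fun _ _ _ => abs_nonneg _
    _ = ‖x‖ := by
        rw [← Fin.sum_univ_eq_sum_range (fun j => |finCoord N j x|), PiLp.norm_eq_of_L1]
        simp [finCoord]

theorem norm_finCoord_le (N j : ℕ) : ‖finCoord N j‖ ≤ 1 :=
  (finCoord N j).opNorm_le_bound zero_le_one fun x => by
    simpa using sum_abs_finCoord_le N x {j}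

theorem norm_finBasisVec_le (N k : ℕ) : ‖finBasisVec N k‖ ≤ 1 := by
  unfold finBasisVec
  split_ifs <;> simp [PiLp.norm_single]

theorem finCoord_finBasisVec {N k : ℕ} (hk : k < N) (j : ℕ) :
    finCoord N j (finBasisVec N k) = if j = k then 1 else 0 := by
  unfold finCoord finBasisVec
  split_ifs with hj hjk hjk <;> simp_all [Fin.ext_iff]

theorem stmt_7_general (p : ℝ≥0∞) [Fact (1 ≤ p)]
    (m : ℕ → ℕ) (hm : ∀ C : ℕ, ∃ n, C < m n)
    (X : Type*) [NormedAddCommGroup X] [NormedSpace ℝ X]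
    (U : X →L[ℝ] (lp (fun n : ℕ => PiLp 1 (fun _ : Fin (m n) => ℝ)) p))
    (V : (lp (fun n : ℕ => PiLp 1 (fun _ : Fin (m n) => ℝ)) p) →L[ℝ] X)
    (hUV : U.comp V =
      ContinuousLinearMap.id ℝ (lp (fun n : ℕ => PiLp 1 (fun _ : Fin (m n) => ℝ)) p)) :
    ¬ IsGrothendieckSpace (X →L[ℝ] X) := by
  intro hX
  have hp : p ≠ 0 := (zero_lt_one.trans_le Fact.out).ne'
  have : (comap m atTop).NeBot := comap_neBot fun t ht => by
    obtain ⟨C, hC⟩ := mem_atTop_sets.1 ht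
    obtain ⟨n, hn⟩ := hm C
    exact ⟨n, hC _ hn.le⟩
  choose D hD hDx using fun k => lp.exists_diagonal (p := p)
    (fun n => (finCoord (m n) 0).smulRight (finBasisVec (m n) k)) zero_le_one fun n => by
      rw [ContinuousLinearMap.norm_smulRight_apply]
      exact mul_le_one₀ (norm_finCoord_le _ _) (norm_nonneg _) (norm_finBasisVec_le _ _)
  refine not_isGrothendieckSpace_continuousLinearMap_of_eventually_biorthogonal
    (F := comap m atTop) (fun n j => (finCoord (m n) j).comp (lp.evalCLM ℝ _ p n))
    (fun n z s => (sum_abs_finCoord_le _ _ s).trans (lp.norm_apply_le_norm hp z n))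
    (fun n => lp.single p n (finBasisVec (m n) 0)) (R := 1)
    (fun n => (lp.norm_single hp.bot_lt n _).trans_le (norm_finBasisVec_le _ _)) D hD
    (fun k => ?_) (hX.continuousLinearMap_of_comp_eq_id U V hUV)
  filter_upwards [tendsto_comap.eventually_gt_atTop k] with n hn j
  change finCoord (m n) j (D k (lp.single p n (finBasisVec (m n) 0)) n) = _
  rw [hDx, lp.single_apply_self, ContinuousLinearMap.smulRight_apply,
    finCoord_finBasisVec (k.zero_le.trans_lt hn), if_pos rfl, one_smul, finCoord_finBasisVec hn]

/-- Let `1 ≤ p < ∞` and let `(m_n)` be an unbounded sequence of natural numbers.  If a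
Banach space `X` contains a complemented copy of `(⊕_{n∈ℕ} ℓ_1^{m_n})_{ℓ_p}`, then
`B(X)` is not a Grothendieck space. -/
theorem stmt_7 (p : ℝ≥0∞) [Fact (1 ≤ p)] (hp : p < ⊤)
    (m : ℕ → ℕ) (hm : ∀ C : ℕ, ∃ n, C < m n)
    (X : Type*) [NormedAddCommGroup X] [NormedSpace ℝ X] [CompleteSpace X]
    (U : X →L[ℝ] (lp (fun n : ℕ => PiLp 1 (fun _ : Fin (m n) => ℝ)) p))
    (V : (lp (fun n : ℕ => PiLp 1 (fun _ : Fin (m n) => ℝ)) p) →L[ℝ] X)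
    (hUV : U.comp V =
      ContinuousLinearMap.id ℝ (lp (fun n : ℕ => PiLp 1 (fun _ : Fin (m n) => ℝ)) p)) :
    ¬ IsGrothendieckSpace (X →L[ℝ] X) :=
  stmt_7_general p m hm X U V hUV
end

section
/- Let (m_n) be an unbounded sequence of natural numbers with m_n ≥ 1 for all n. Then the Banach space (⊕_{n∈ℕ} ℓ_1^{m_n})_{ℓ∞} is isomorphic (linearly homeomorphic) to (⊕_{n∈ℕ} ℓ_1^n)_{ℓ∞}. -/
/-!
A bijection between the coordinates of two block decompositions under which every block of
either side is covered by at most `N` blocks of the other induces an isomorphism of the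
`ℓ∞`-sums of the `ℓ₁`-blocks, of norm at most `N` in each direction. Cutting each block
`ℓ₁^{m n}` into `ℓ₁^{a n}` and `ℓ₁^{m n - a n}` is such a bijection with `N = 2`. Since `m` is
unbounded, `a` can be chosen so that every size occurs infinitely often among the pieces; two
countable families in which every size occurs infinitely often are permutations of each other,
so after cutting both `m` and `n ↦ n + 1` the two spaces differ only by a reindexing of blocks.
-/

open scoped ENNReal

noncomputable section

namespace LinftySumL1

variable (𝕜 : Type*) [NormedField 𝕜] {I J : Type*}

abbrev Space (κ : I → Type*) [∀ i, Fintype (κ i)] : Type _ :=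
  lp (fun i => PiLp 1 (fun _ : κ i => 𝕜)) ∞

variable {𝕜} {κ : I → Type*} {κ' : J → Type*} [∀ i, Fintype (κ i)] [∀ j, Fintype (κ' j)]

def DrawsFromAtMost (π : (Σ j, κ' j) ≃ (Σ i, κ i)) (N : ℕ) : Prop :=
  ∀ j, ∃ s : Finset I, s.card ≤ N ∧ ∀ k, (π ⟨j, k⟩).1 ∈ s

def relabel (π : (Σ j, κ' j) ≃ (Σ i, κ i)) (x : ∀ i, PiLp 1 (fun _ : κ i => 𝕜)) (j : J) :
    PiLp 1 (fun _ : κ' j => 𝕜) :=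
  WithLp.toLp 1 fun k => x (π ⟨j, k⟩).1 (π ⟨j, k⟩).2

theorem norm_relabel_le (π : (Σ j, κ' j) ≃ (Σ i, κ i)) (x : ∀ i, PiLp 1 (fun _ : κ i => 𝕜))
    {j : J} {s : Finset I} (hs : ∀ k, (π ⟨j, k⟩).1 ∈ s) :
    ‖relabel π x j‖ ≤ ∑ i ∈ s, ‖x i‖ := by
  let ιj : κ' j ↪ Σ i, κ i := (Function.Embedding.sigmaMk j).trans π.toEmbedding
  calc ‖relabel π x j‖ = ∑ p ∈ Finset.univ.map ιj, ‖x p.1 p.2‖ := by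
        rw [PiLp.norm_eq_of_L1, Finset.sum_map]; rfl
    _ ≤ ∑ p ∈ s.sigma fun _ => Finset.univ, ‖x p.1 p.2‖ :=
        Finset.sum_le_sum_of_subset_of_nonneg
          (fun p hp => by
            obtain ⟨k, -, rfl⟩ := Finset.mem_map.mp hp
            exact Finset.mem_sigma.mpr ⟨hs k, Finset.mem_univ _⟩)
          (fun _ _ _ => norm_nonneg _)
    _ = ∑ i ∈ s, ‖x i‖ := by
        rw [Finset.sum_sigma]; simp only [PiLp.norm_eq_of_L1]

theorem norm_relabel_le_mul {π : (Σ j, κ' j) ≃ (Σ i, κ i)} {N : ℕ} (hπ : DrawsFromAtMost π N)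
    (x : Space 𝕜 κ) (j : J) : ‖relabel π (⇑x) j‖ ≤ N * ‖x‖ := by
  obtain ⟨s, hsN, hs⟩ := hπ j
  calc ‖relabel π (⇑x) j‖ ≤ ∑ i ∈ s, ‖x i‖ := norm_relabel_le π x hs
    _ ≤ s.card • ‖x‖ := Finset.sum_le_card_nsmul _ _ _ fun i _ =>
        lp.norm_apply_le_norm ENNReal.top_ne_zero x i
    _ ≤ N * ‖x‖ := by
        rw [nsmul_eq_mul]; gcongr

def relabelₗ {π : (Σ j, κ' j) ≃ (Σ i, κ i)} {N : ℕ} (hπ : DrawsFromAtMost π N) :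
    Space 𝕜 κ →ₗ[𝕜] Space 𝕜 κ' where
  toFun x := ⟨relabel π x, memℓp_infty ⟨N * ‖x‖, by
    rintro - ⟨j, rfl⟩; exact norm_relabel_le_mul hπ x j⟩⟩
  map_add' _ _ := rfl
  map_smul' _ _ := rfl

def relabelL {π : (Σ j, κ' j) ≃ (Σ i, κ i)} {N : ℕ} (hπ : DrawsFromAtMost π N) :
    Space 𝕜 κ →L[𝕜] Space 𝕜 κ' :=
  (relabelₗ hπ).mkContinuous N fun x =>
    lp.norm_le_of_forall_le (by positivity) (norm_relabel_le_mul hπ x)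

@[simp]
theorem relabelL_apply {π : (Σ j, κ' j) ≃ (Σ i, κ i)} {N : ℕ} (hπ : DrawsFromAtMost π N)
    (x : Space 𝕜 κ) (j : J) (k : κ' j) : relabelL hπ x j k = x (π ⟨j, k⟩).1 (π ⟨j, k⟩).2 :=
  rfl

def relabelEquiv {π : (Σ j, κ' j) ≃ (Σ i, κ i)} {N N' : ℕ} (hπ : DrawsFromAtMost π N)
    (hπ' : DrawsFromAtMost π.symm N') : Space 𝕜 κ ≃L[𝕜] Space 𝕜 κ' :=
  .equivOfInverse (relabelL hπ) (relabelL hπ')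
    (fun x => by ext i k; rw [relabelL_apply, relabelL_apply, Sigma.eta, Equiv.apply_symm_apply])
    (fun y => by ext j k; rw [relabelL_apply, relabelL_apply, Sigma.eta, Equiv.symm_apply_apply])

def splitSigmaEquiv {d a : I → ℕ} (h : a ≤ d) :
    (Σ j : I ⊕ I, Fin (Sum.elim a (d - a) j)) ≃ Σ i, Fin (d i) :=
  (Equiv.sumSigmaDistrib _).trans <| (Equiv.sigmaSumDistrib (fun i => Fin (a i))
    (fun i => Fin (d i - a i))).symm.trans <|
      Equiv.sigmaCongrRight fun i => finSumFinEquiv.trans (finCongr (Nat.add_sub_of_le (h i)))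

theorem splitSigmaEquiv_fst {d a : I → ℕ} (h : a ≤ d) (j : I ⊕ I)
    (k : Fin (Sum.elim a (d - a) j)) : (splitSigmaEquiv h ⟨j, k⟩).1 = j.elim id id := by
  rcases j with i | i <;> rfl

theorem splitSigmaEquiv_symm_fst_mem [DecidableEq I] {d a : I → ℕ} (h : a ≤ d) (i : I)
    (k : Fin (d i)) :
    ((splitSigmaEquiv h).symm ⟨i, k⟩).1 ∈ ({.inl i, .inr i} : Finset (I ⊕ I)) := by
  have := splitSigmaEquiv_fst h _ ((splitSigmaEquiv h).symm ⟨i, k⟩).2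
  rw [Sigma.eta, Equiv.apply_symm_apply] at this
  revert this
  rcases ((splitSigmaEquiv h).symm ⟨i, k⟩).1 with i' | i' <;> simp +contextual [eq_comm]

def splitEquiv {d a : I → ℕ} (h : a ≤ d) :
    Space 𝕜 (fun i => Fin (d i)) ≃L[𝕜] Space 𝕜 (fun j => Fin (Sum.elim a (d - a) j)) :=
  relabelEquiv (π := splitSigmaEquiv h) (N := 1) (N' := 2)
    (fun j => ⟨{j.elim id id}, by simp, fun k => by simp [splitSigmaEquiv_fst]⟩)
    (fun i => by classical exact ⟨_, Finset.card_le_two, splitSigmaEquiv_symm_fst_mem h i⟩)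

def reindexEquiv {d : I → ℕ} {e : J → ℕ} (φ : J ≃ I) (h : ∀ j, d (φ j) = e j) :
    Space 𝕜 (fun i => Fin (d i)) ≃L[𝕜] Space 𝕜 (fun j => Fin (e j)) :=
  relabelEquiv (π := Equiv.sigmaCongr φ fun j => finCongr (h j).symm) (N := 1) (N' := 1)
    (fun j => ⟨{φ j}, by simp, fun _ => Finset.mem_singleton_self _⟩)
    (fun i => ⟨{φ.symm i}, by simp, fun _ => Finset.mem_singleton_self _⟩)

end LinftySumL1

open Filter

theorem frequently_le_of_forall_exists_lt {m : ℕ → ℕ} (hm : ∀ C, ∃ n, C < m n) (s : ℕ) :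
    ∃ᶠ n in atTop, s ≤ m n := by
  by_contra h
  rw [not_frequently] at h
  obtain ⟨C, hC⟩ := (isBoundedUnder_of_eventually_le (h.mono fun n hn =>
    (not_le.mp hn).le)).bddAbove_range
  obtain ⟨n, hn⟩ := hm C
  exact hn.not_ge (hC ⟨n, rfl⟩)

theorem exists_le_infinite_fibers_sumElim {m : ℕ → ℕ} (hm : ∀ C, ∃ n, C < m n) :
    ∃ a : ℕ → ℕ, a ≤ m ∧ ∀ s, {j | Sum.elim a (m - a) j = s}.Infinite := by
  obtain ⟨g, hg, hgm⟩ := extraction_forall_of_frequently fun r =>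
    frequently_le_of_forall_exists_lt hm (Nat.unpair r).1
  -- The blocks `g (pair s i)`, `i ∈ ℕ`, are distinct and of size at least `s`; cut a piece of
  -- size `s` off each of them.
  refine ⟨Function.extend g (fun r => (Nat.unpair r).1) 0, fun n => ?_, fun s => ?_⟩
  · by_cases hn : ∃ r, g r = n
    · obtain ⟨r, rfl⟩ := hn
      rw [hg.injective.extend_apply]
      exact hgm r
    · rw [Function.extend_apply' _ _ _ hn]
      exact Nat.zero_le _
  · refine Set.infinite_of_injective_forall_mem (f := fun i => .inl (g (Nat.pair s i)))
      (fun i i' hi => ?_) fun i => ?_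
    · exact (Nat.pair_eq_pair.mp (hg.injective (Sum.inl_injective hi))).2
    · simp [hg.injective.extend_apply]

theorem exists_equiv_map_eq_of_infinite_fibers {α J K : Type*} [Countable J] [Countable K]
    {u : J → α} {v : K → α} (hu : ∀ s, {j | u j = s}.Infinite)
    (hv : ∀ s, {k | v k = s}.Infinite) : ∃ φ : J ≃ K, ∀ j, v (φ j) = u j :=
  have (s : α) : Infinite {j // u j = s} := (hu s).to_subtype
  have (s : α) : Infinite {k // v k = s} := (hv s).to_subtype
  ⟨.ofFiberEquiv fun _ => Classical.arbitrary _, Equiv.ofFiberEquiv_map _⟩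

theorem stmt_9_general (m : ℕ → ℕ) (hm : ∀ C : ℕ, ∃ n, C < m n) :
    Nonempty
      ((lp (fun n : ℕ => PiLp 1 (fun _ : Fin (m n) => ℝ)) ⊤) ≃L[ℝ]
       (lp (fun n : ℕ => PiLp 1 (fun _ : Fin (n + 1) => ℝ)) ⊤)) := by
  obtain ⟨a, ha, hau⟩ := exists_le_infinite_fibers_sumElim hm
  obtain ⟨b, hb, hbu⟩ := exists_le_infinite_fibers_sumElim (m := (· + 1))
    fun C => ⟨C, C.lt_succ_self⟩
  obtain ⟨φ, hφ⟩ := exists_equiv_map_eq_of_infinite_fibers hbu hau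
  exact ⟨(LinftySumL1.splitEquiv ha).trans <|
    (LinftySumL1.reindexEquiv φ hφ).trans (LinftySumL1.splitEquiv hb).symm⟩

/-- Let `(m_n)` be an unbounded sequence of natural numbers with `m_n ≥ 1` for all `n`.
Then `(⊕_{n∈ℕ} ℓ_1^{m_n})_{ℓ∞}` is isomorphic (linearly homeomorphic) to
`(⊕_{n∈ℕ} ℓ_1^n)_{ℓ∞}`. -/
theorem stmt_9 (m : ℕ → ℕ) (hm1 : ∀ n, 1 ≤ m n) (hm : ∀ C : ℕ, ∃ n, C < m n) :
    Nonempty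
      ((lp (fun n : ℕ => PiLp 1 (fun _ : Fin (m n) => ℝ)) ⊤) ≃L[ℝ]
       (lp (fun n : ℕ => PiLp 1 (fun _ : Fin (n + 1) => ℝ)) ⊤)) :=
  stmt_9_general m hm
end
end

section
/- Let p ∈ (1,∞), let M_n = [2^{n-1}, 2^n) ∩ ℕ for n ≥ 1, and let x_1, ..., x_N be finitely supported real sequences with the support of x_n contained in M_n and ‖x_n‖_{B_p} ≤ 1 for each n. Define Δ : c₀₀ → c₀₀ by Δ(y) = Σ_{n=1}^N y_{2^n−1} · x_n, where y_j denotes the j-th coordinate of y. Then for every finitely supported real sequence y and every non-empty finite subset N ⊆ ℕ, one has μ(Δ(y), N) ≤ μ(y, uep(N)), where uep(N) = { 2^k − 1 : k ∈ ℕ, N ∩ M_k ≠ ∅ }. -/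
/-- A non-empty finite subset `M` of `ℕ = {1,2,...}` is admissible if `|M| ≤ min M`,
i.e. `M` is non-empty and its cardinality is at most every element of `M`. -/
def Admissible (M : Finset ℕ) : Prop := M.Nonempty ∧ ∀ k ∈ M, M.card ≤ k

/-- `μ(x, N) = ∑_{n ∈ N} |x_n|`. -/
def mu (x : ℕ → ℝ) (N : Finset ℕ) : ℝ := ∑ n ∈ N, |x n|

/-- `N₁ < N₂ < ⋯ < N_k`: every element of `N i` is smaller than every element of `N j`
whenever `i < j`. -/
def SepChain {k : ℕ} (N : Fin k → Finset ℕ) : Prop :=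
  ∀ i j : Fin k, i < j → ∀ a ∈ N i, ∀ b ∈ N j, a < b

/-- The Baernstein norm
`‖x‖_{B_p} = sup { ν_p(x; N₁,…,N_k) : k ≥ 1, N₁ < ⋯ < N_k admissible }`, where
`ν_p(x; N₁,…,N_k) = (∑_j μ(x,N_j)^p)^{1/p}`. -/
noncomputable def BpNorm (p : ℝ) (x : ℕ → ℝ) : ℝ :=
  sSup { t : ℝ | ∃ (k : ℕ) (N : Fin k → Finset ℕ), 0 < k ∧ (∀ j, Admissible (N j)) ∧
    SepChain N ∧ t = (∑ j, (mu x (N j)) ^ p) ^ (1 / p) }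

/-- The block `M_n = [2^{n-1}, 2^n) ∩ ℕ`. -/
def Mblock (n : ℕ) : Finset ℕ := Finset.Ico (2 ^ (n - 1)) (2 ^ n)

/-- `uep(N) = { 2^k − 1 : k ≥ 1, N ∩ M_k ≠ ∅ }`, the set of upper end points of the
blocks `M_k` that `N` intersects. -/
def uep (N : Finset ℕ) : Finset ℕ :=
  ((Finset.range (N.sup id + 2)).filter fun k => 1 ≤ k ∧ (N ∩ Mblock k).Nonempty).image
    fun k => 2 ^ k - 1

/-- The diagonal operator `Δ(y) = ∑_{n=1}^K y_{2^n−1} · x_n`. -/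
def DeltaOp (K : ℕ) (x : ℕ → ℕ → ℝ) (y : ℕ → ℝ) : ℕ → ℝ :=
  fun j => ∑ n ∈ Finset.Icc 1 K, y (2 ^ n - 1) * x n j

/-!
Each block `S ∩ M_n` is admissible, since `|M_n| = 2^{n-1} = min M_n`, so testing the Baernstein
norm on that single set gives `μ(x_n, S ∩ M_n) ≤ ‖x_n‖_{B_p} ≤ 1`. As `x_n` lives on `M_n`, the
triangle inequality yields `μ(Δ(y), S) ≤ ∑_n |y_{2^n-1}| μ(x_n, S ∩ M_n)`, and only the blocks met
by `S` contribute, each with weight at most `|y_{2^n-1}|`; these are the coordinates in `uep(S)`.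
-/

open Finset

lemma mu_nonneg (x : ℕ → ℝ) (N : Finset ℕ) : 0 ≤ mu x N :=
  sum_nonneg fun _ _ => abs_nonneg _

lemma mu_mono (x : ℕ → ℝ) {N N' : Finset ℕ} (h : N ⊆ N') : mu x N ≤ mu x N' :=
  sum_le_sum_of_subset_of_nonneg h fun _ _ _ => abs_nonneg _

lemma mu_inter_eq_of_support_subset {x : ℕ → ℝ} {M : Finset ℕ}
    (hx : Function.support x ⊆ M) (N : Finset ℕ) : mu x (N ∩ M) = mu x N := by
  refine sum_subset inter_subset_left fun j hjN hjNM => ?_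
  have hj : x j = 0 := Function.notMem_support.1 fun hj => hjNM (mem_inter.2 ⟨hjN, hx hj⟩)
  rw [hj, abs_zero]

lemma SepChain.pairwiseDisjoint {k : ℕ} {N : Fin k → Finset ℕ} (hN : SepChain N) :
    ((univ : Finset (Fin k)) : Set (Fin k)).PairwiseDisjoint N := by
  intro i _ j _ hij
  refine disjoint_left.2 fun a hai haj => ?_
  rcases lt_or_gt_of_ne hij with h | h
  · exact lt_irrefl a (hN i j h a hai a haj)
  · exact lt_irrefl a (hN j i h a haj a hai)

lemma sum_mu_le_of_sepChain {x : ℕ → ℝ} {M : Finset ℕ} (hx : Function.support x ⊆ M)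
    {k : ℕ} {N : Fin k → Finset ℕ} (hN : SepChain N) : ∑ j, mu x (N j) ≤ mu x M := by
  calc ∑ j, mu x (N j) = mu x (univ.biUnion N) := (sum_biUnion hN.pairwiseDisjoint).symm
    _ = mu x (univ.biUnion N ∩ M) := (mu_inter_eq_of_support_subset hx _).symm
    _ ≤ mu x M := mu_mono x inter_subset_right

lemma sum_rpow_le_rpow_sum {ι : Type*} (s : Finset ι) {f : ι → ℝ} (hf : ∀ i ∈ s, 0 ≤ f i)
    {p : ℝ} (hp : 1 ≤ p) : ∑ i ∈ s, f i ^ p ≤ (∑ i ∈ s, f i) ^ p := by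
  classical
  induction s using Finset.induction_on with
  | empty => simp [Real.zero_rpow (by linarith : p ≠ 0)]
  | insert a s ha ih =>
    have hfs : ∀ i ∈ s, 0 ≤ f i := fun i hi => hf i (mem_insert_of_mem hi)
    rw [sum_insert ha, sum_insert ha]
    calc f a ^ p + ∑ i ∈ s, f i ^ p ≤ f a ^ p + (∑ i ∈ s, f i) ^ p := by gcongr; exact ih hfs
      _ ≤ (f a + ∑ i ∈ s, f i) ^ p :=
        Real.add_rpow_le_rpow_add (hf a (mem_insert_self a s)) (sum_nonneg hfs) hp

def nuValues (p : ℝ) (x : ℕ → ℝ) : Set ℝ :=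
  { t : ℝ | ∃ (k : ℕ) (N : Fin k → Finset ℕ), 0 < k ∧ (∀ j, Admissible (N j)) ∧
    SepChain N ∧ t = (∑ j, (mu x (N j)) ^ p) ^ (1 / p) }

lemma nuValues_le_mu {p : ℝ} (hp : 1 ≤ p) {x : ℕ → ℝ} {M : Finset ℕ}
    (hx : Function.support x ⊆ M) : ∀ t ∈ nuValues p x, t ≤ mu x M := by
  rintro t ⟨k, N, -, -, hN, rfl⟩
  have hp0 : p ≠ 0 := by linarith
  calc (∑ j, mu x (N j) ^ p) ^ (1 / p) ≤ ((∑ j, mu x (N j)) ^ p) ^ (1 / p) := by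
        refine Real.rpow_le_rpow (sum_nonneg fun j _ => ?_) ?_ (by positivity)
        · exact Real.rpow_nonneg (mu_nonneg x (N j)) p
        · exact sum_rpow_le_rpow_sum _ (fun j _ => mu_nonneg x (N j)) hp
    _ = ∑ j, mu x (N j) := by
        rw [← Real.rpow_mul (sum_nonneg fun j _ => mu_nonneg x (N j)),
          mul_one_div_cancel hp0, Real.rpow_one]
    _ ≤ mu x M := sum_mu_le_of_sepChain hx hN

lemma mu_le_BpNorm {p : ℝ} (hp : 1 ≤ p) {x : ℕ → ℝ} (hx : (Function.support x).Finite)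
    {A : Finset ℕ} (hA : Admissible A) : mu x A ≤ BpNorm p x := by
  have hbdd : BddAbove (nuValues p x) :=
    ⟨mu x hx.toFinset, nuValues_le_mu hp (by rw [hx.coe_toFinset])⟩
  refine le_csSup hbdd ⟨1, fun _ => A, one_pos, fun _ => hA, ?_, ?_⟩
  · intro i j hij
    exact absurd (Subsingleton.elim i j ▸ hij) (lt_irrefl j)
  · rw [Fin.sum_univ_one, ← Real.rpow_mul (mu_nonneg x A),
      mul_one_div_cancel (by linarith : p ≠ 0), Real.rpow_one]

lemma admissible_of_subset_Mblock {n : ℕ} (hn : 1 ≤ n) {A : Finset ℕ}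
    (hA : A ⊆ Mblock n) (hne : A.Nonempty) : Admissible A := by
  refine ⟨hne, fun k hk => ?_⟩
  have hcard : A.card ≤ 2 ^ n - 2 ^ (n - 1) := (card_le_card hA).trans_eq (Nat.card_Ico _ _)
  have hpow : 2 ^ n = 2 * 2 ^ (n - 1) := by
    rw [← pow_succ', Nat.sub_add_cancel hn]
  have hk : 2 ^ (n - 1) ≤ k := (mem_Ico.1 (hA hk)).1
  omega

lemma mu_le_ite_of_support_subset_Mblock {p : ℝ} (hp : 1 ≤ p) {n : ℕ} (hn : 1 ≤ n)
    {x : ℕ → ℝ} (hx : Function.support x ⊆ Mblock n) (hnorm : BpNorm p x ≤ 1)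
    (S : Finset ℕ) : mu x S ≤ if (S ∩ Mblock n).Nonempty then 1 else 0 := by
  rw [← mu_inter_eq_of_support_subset hx]
  split_ifs with hne
  · exact (mu_le_BpNorm hp ((Mblock n).finite_toSet.subset hx)
      (admissible_of_subset_Mblock hn inter_subset_right hne)).trans hnorm
  · rw [not_nonempty_iff_eq_empty.1 hne, mu, sum_empty]

lemma mu_DeltaOp_le (K : ℕ) (x : ℕ → ℕ → ℝ) (y : ℕ → ℝ) (S : Finset ℕ) :
    mu (DeltaOp K x y) S ≤ ∑ n ∈ Icc 1 K, |y (2 ^ n - 1)| * mu (x n) S := by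
  calc mu (DeltaOp K x y) S ≤ ∑ j ∈ S, ∑ n ∈ Icc 1 K, |y (2 ^ n - 1) * x n j| :=
        sum_le_sum fun j _ => abs_sum_le_sum_abs _ _
    _ = ∑ n ∈ Icc 1 K, |y (2 ^ n - 1)| * mu (x n) S := by
        rw [sum_comm]
        simp only [abs_mul, mu, mul_sum]

lemma mem_uep {S : Finset ℕ} {n : ℕ} (hn : 1 ≤ n) (hS : (S ∩ Mblock n).Nonempty) :
    2 ^ n - 1 ∈ uep S := by
  obtain ⟨a, ha⟩ := hS
  have hlo : 2 ^ (n - 1) ≤ a := (mem_Ico.1 (mem_inter.1 ha).2).1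
  have hsup : a ≤ S.sup id := le_sup (f := id) (mem_inter.1 ha).1
  have hexp : n - 1 < 2 ^ (n - 1) := Nat.lt_two_pow_self
  exact mem_image.2 ⟨n, mem_filter.2 ⟨mem_range.2 (by omega), hn, a, ha⟩, rfl⟩

theorem stmt_11_general (p : ℝ) (hp : 1 < p) (K : ℕ) (x : ℕ → ℕ → ℝ)
    (hsupp : ∀ n, 1 ≤ n → n ≤ K → ∀ j, x n j ≠ 0 → j ∈ Mblock n)
    (hnorm : ∀ n, 1 ≤ n → n ≤ K → BpNorm p (x n) ≤ 1)
    (y : ℕ → ℝ) (S : Finset ℕ) :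
    mu (DeltaOp K x y) S ≤ mu y (uep S) := by
  classical
  set T := (Icc 1 K).filter fun n => (S ∩ Mblock n).Nonempty
  have hblock : ∀ n ∈ Icc 1 K, |y (2 ^ n - 1)| * mu (x n) S ≤
      if (S ∩ Mblock n).Nonempty then |y (2 ^ n - 1)| else 0 := by
    intro n hn
    obtain ⟨hn1, hnK⟩ := mem_Icc.1 hn
    have h := mul_le_mul_of_nonneg_left (mu_le_ite_of_support_subset_Mblock hp.le hn1
      (hsupp n hn1 hnK) (hnorm n hn1 hnK) S) (abs_nonneg (y (2 ^ n - 1)))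
    split_ifs at h ⊢ <;> simpa using h
  have hinj : Set.InjOn (fun n : ℕ => 2 ^ n - 1) T := fun a _ b _ hab =>
    Nat.pow_right_injective le_rfl
      (Nat.sub_one_cancel (Nat.two_pow_pos a) (Nat.two_pow_pos b) hab)
  calc mu (DeltaOp K x y) S ≤ ∑ n ∈ Icc 1 K, |y (2 ^ n - 1)| * mu (x n) S :=
        mu_DeltaOp_le K x y S
    _ ≤ ∑ n ∈ T, |y (2 ^ n - 1)| := by rw [sum_filter]; exact sum_le_sum hblock
    _ = mu y (T.image fun n => 2 ^ n - 1) := (sum_image (f := fun m => |y m|) hinj).symm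
    _ ≤ mu y (uep S) := mu_mono y fun m hm => by
        obtain ⟨n, hn, rfl⟩ := mem_image.1 hm
        exact mem_uep (mem_Icc.1 (mem_filter.1 hn).1).1 (mem_filter.1 hn).2

/-- Let `p ∈ (1,∞)` and let `x_1, …, x_K` be finitely supported real sequences with the
support of `x_n` contained in `M_n = [2^{n-1}, 2^n) ∩ ℕ` and `‖x_n‖_{B_p} ≤ 1` for each
`n`.  Define `Δ(y) = ∑_{n=1}^K y_{2^n−1} · x_n`.  Then for every finitely supported real
sequence `y` and every non-empty finite subset `S` of `ℕ = {1, 2, …}`,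
`μ(Δ(y), S) ≤ μ(y, uep(S))`. -/
theorem stmt_11 (p : ℝ) (hp : 1 < p) (K : ℕ) (hK : 1 ≤ K) (x : ℕ → ℕ → ℝ)
    (hsupp : ∀ n, 1 ≤ n → n ≤ K → ∀ j, x n j ≠ 0 → j ∈ Mblock n)
    (hnorm : ∀ n, 1 ≤ n → n ≤ K → BpNorm p (x n) ≤ 1)
    (y : ℕ → ℝ) (hy : (Function.support y).Finite)
    (S : Finset ℕ) (hS : S.Nonempty) (hS0 : 0 ∉ S) :
    mu (DeltaOp K x y) S ≤ mu y (uep S) :=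
  stmt_11_general p hp K x hsupp hnorm y S
end

section
/- Let p ∈ (1,∞) and, for natural numbers q ≤ r, set y_{q,r} = Σ_{n=q}^{r} (1/n) x_n, where x_n = 2^{-(n-1)} Σ_{j=2^{n-1}}^{2^n − 1} b_j is the normalized indicator of M_n = [2^{n-1}, 2^n) ∩ ℕ. Then ‖y_{q,r}‖_{B_p} = (Σ_{n=q}^{r} n^{-p})^{1/p}. -/
open Finset Function

noncomputable def normalizedIndicator (n j : ℕ) : ℝ :=
  if j ∈ Mblock n then (1 / 2 ^ (n - 1) : ℝ) else 0

noncomputable def blockCombination (a : ℕ → ℝ) (s : Finset ℕ) (j : ℕ) : ℝ :=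
  ∑ n ∈ s, a n * normalizedIndicator n j

lemma mem_Mblock {j n : ℕ} : j ∈ Mblock n ↔ 2 ^ (n - 1) ≤ j ∧ j < 2 ^ n := mem_Ico

lemma Mblock_disjoint {m n : ℕ} (h : m ≠ n) : Disjoint (Mblock m) (Mblock n) := by
  wlog hlt : m < n generalizing m n
  · exact (this h.symm (by omega)).symm
  have : 2 ^ m ≤ 2 ^ (n - 1) := Nat.pow_le_pow_right two_pos (by omega)
  exact disjoint_left.2 fun j hm hn => by rw [mem_Mblock] at hm hn; omega

lemma card_Mblock {n : ℕ} (hn : n ≠ 0) : #(Mblock n) = 2 ^ (n - 1) := by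
  have : 2 ^ n = 2 * 2 ^ (n - 1) := by rw [← pow_succ']; congr 1; omega
  rw [Mblock, Nat.card_Ico]; omega

lemma card_Mblock_le (n : ℕ) : #(Mblock n) ≤ 2 ^ (n - 1) := by
  rcases eq_or_ne n 0 with rfl | hn
  · simp [Mblock]
  · exact (card_Mblock hn).le

lemma Mblock_admissible {n : ℕ} (hn : n ≠ 0) : Admissible (Mblock n) :=
  ⟨⟨2 ^ (n - 1), mem_Mblock.2 ⟨le_rfl, Nat.pow_lt_pow_right one_lt_two (by omega)⟩⟩,
    fun _ hj => (card_Mblock_le n).trans (mem_Mblock.1 hj).1⟩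

lemma sepChain_Mblock_comp {k : ℕ} {e : Fin k → ℕ} (he : StrictMono e) :
    SepChain (Mblock ∘ e) := by
  intro i j hij a ha b hb
  have : 2 ^ e i ≤ 2 ^ (e j - 1) := Nat.pow_le_pow_right two_pos (by have := he hij; omega)
  rw [Function.comp_apply, mem_Mblock] at ha hb
  omega

lemma SepChain.pairwise_disjoint {k : ℕ} {N : Fin k → Finset ℕ} (hN : SepChain N) :
    Pairwise (Disjoint on N) := by
  intro i j hij
  rcases hij.lt_or_gt with h | h
  · exact disjoint_left.2 fun a ha ha' => (hN i j h a ha a ha').false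
  · exact disjoint_left.2 fun a ha ha' => (hN j i h a ha' a ha).false

lemma Finset.sum_card_inter_le_card {ι α : Type*} [DecidableEq α] {t : Finset ι}
    {A : ι → Finset α} (hA : (t : Set ι).PairwiseDisjoint A) (B : Finset α) :
    ∑ i ∈ t, #(A i ∩ B) ≤ #B := by
  rw [← card_biUnion (hA.mono_on fun i _ => inter_subset_left)]
  exact card_le_card (biUnion_subset.2 fun i _ => inter_subset_right)

lemma normalizedIndicator_nonneg (n j : ℕ) : 0 ≤ normalizedIndicator n j := by
  unfold normalizedIndicator; positivity

lemma mu_blockCombination {a : ℕ → ℝ} (ha : ∀ n, 0 ≤ a n) (s N : Finset ℕ) :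
    mu (blockCombination a s) N = ∑ n ∈ s, #(N ∩ Mblock n) / 2 ^ (n - 1) * a n := by
  have hnonneg (j : ℕ) : 0 ≤ blockCombination a s j :=
    sum_nonneg fun n _ => mul_nonneg (ha n) (normalizedIndicator_nonneg n j)
  simp only [mu, abs_of_nonneg (hnonneg _)]
  simp only [blockCombination, normalizedIndicator]
  rw [sum_comm]
  refine sum_congr rfl fun n _ => ?_
  rw [← mul_sum, sum_ite_mem, sum_const, nsmul_eq_mul]
  ring

lemma SepChain.sum_card_inter_Mblock_div_le_one {k : ℕ} {N : Fin k → Finset ℕ}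
    (hN : SepChain N) (n : ℕ) : ∑ j, (#(N j ∩ Mblock n) : ℝ) / 2 ^ (n - 1) ≤ 1 := by
  rw [← sum_div, div_le_one (by positivity)]
  exact_mod_cast (sum_card_inter_le_card (hN.pairwise_disjoint.set_pairwise _) _).trans
    (card_Mblock_le n)

lemma Real.rpow_sum_mul_le_sum_mul_rpow {ι : Type*} (s : Finset ι) {p : ℝ} (hp : 1 ≤ p)
    {w f : ι → ℝ} (hw : ∀ i, 0 ≤ w i) (hf : ∀ i, 0 ≤ f i) (hw1 : ∑ i ∈ s, w i ≤ 1) :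
    (∑ i ∈ s, w i * f i) ^ p ≤ ∑ i ∈ s, w i * f i ^ p := by
  have hp0 : p ≠ 0 := by positivity
  have hS : 0 ≤ ∑ i ∈ s, w i * f i ^ p :=
    sum_nonneg fun i _ => mul_nonneg (hw i) (Real.rpow_nonneg (hf i) p)
  have holder : ∑ i ∈ s, w i * f i ≤ (∑ i ∈ s, w i * f i ^ p) ^ p⁻¹ :=
    calc ∑ i ∈ s, w i * f i
        ≤ (∑ i ∈ s, w i) ^ (1 - p⁻¹) * (∑ i ∈ s, w i * f i ^ p) ^ p⁻¹ :=
          Real.inner_le_weight_mul_Lp_of_nonneg s hp w f hw hf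
      _ ≤ (∑ i ∈ s, w i * f i ^ p) ^ p⁻¹ := by
          refine mul_le_of_le_one_left (by positivity)
            (Real.rpow_le_one (sum_nonneg fun i _ => hw i) hw1 ?_)
          simpa using inv_le_one_of_one_le₀ hp
  calc (∑ i ∈ s, w i * f i) ^ p ≤ ((∑ i ∈ s, w i * f i ^ p) ^ p⁻¹) ^ p :=
        Real.rpow_le_rpow (sum_nonneg fun i _ => mul_nonneg (hw i) (hf i)) holder (by positivity)
    _ = ∑ i ∈ s, w i * f i ^ p := Real.rpow_inv_rpow hS hp0

lemma Admissible.sum_card_inter_Mblock_div_le_one {N : Finset ℕ} (hN : Admissible N)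
    (s : Finset ℕ) : ∑ n ∈ s, (#(N ∩ Mblock n) : ℝ) / 2 ^ (n - 1) ≤ 1 := by
  obtain ⟨hne, hcard⟩ := hN
  set m := N.min' hne
  have hm : #N ≤ m := hcard m (N.min'_mem hne)
  set L := Nat.log 2 m
  have hLm : 2 ^ L ≤ m := Nat.pow_log_le_self 2 (by have := hne.card_pos; omega)
  have hmL : m < 2 ^ (L + 1) := Nat.lt_pow_succ_log_self one_lt_two m
  have hlow (n : ℕ) (hn : (N ∩ Mblock n).Nonempty) : L + 1 ≤ n := by
    obtain ⟨x, hx⟩ := hn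
    obtain ⟨hxN, hxn⟩ := mem_inter.1 hx
    have : 2 ^ L < 2 ^ n := hLm.trans_lt ((N.min'_le x hxN).trans_lt (mem_Mblock.1 hxn).2)
    exact (Nat.pow_lt_pow_iff_right (by norm_num)).1 this
  have hfirst : #(N ∩ Mblock (L + 1)) ≤ 2 ^ (L + 1) - m := by
    rw [← Nat.card_Ico]
    refine card_le_card fun x hx => ?_
    obtain ⟨hxN, hxn⟩ := mem_inter.1 hx
    exact mem_Ico.2 ⟨N.min'_le x hxN, (mem_Mblock.1 hxn).2⟩
  have hsum : ∑ n ∈ s, #(N ∩ Mblock n) ≤ m := by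
    simp_rw [inter_comm N]
    exact (sum_card_inter_le_card (fun i _ j _ h => Mblock_disjoint h) N).trans hm
  -- only points of `M_(L+1)` weigh `2^(-L)`; points of later blocks weigh at most `2^(-(L+1))`
  have hterm (n : ℕ) : (#(N ∩ Mblock n) : ℝ) / 2 ^ (n - 1) ≤
      (#(N ∩ Mblock n) + if n = L + 1 then #(N ∩ Mblock n) else 0 : ℕ) / 2 ^ (L + 1) := by
    rcases (N ∩ Mblock n).eq_empty_or_nonempty with h | h
    · simp [h]
    rcases (hlow n h).eq_or_lt with rfl | hlt
    · rw [if_pos rfl, pow_succ]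
      push_cast
      field_simp
      norm_num
    · rw [if_neg hlt.ne', add_zero]
      gcongr
      · norm_num
      · omega
  have hnum : ∑ n ∈ s, (#(N ∩ Mblock n) + if n = L + 1 then #(N ∩ Mblock n) else 0) ≤
      2 ^ (L + 1) := by
    rw [sum_add_distrib, sum_ite_eq']
    split_ifs <;> omega
  calc ∑ n ∈ s, (#(N ∩ Mblock n) : ℝ) / 2 ^ (n - 1)
      ≤ ∑ n ∈ s, ((#(N ∩ Mblock n) + if n = L + 1 then #(N ∩ Mblock n) else 0 : ℕ) : ℝ) /
          2 ^ (L + 1) := sum_le_sum fun n _ => hterm n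
    _ ≤ 1 := by
      rw [← sum_div, div_le_one (by positivity)]
      exact_mod_cast hnum

lemma sum_mu_blockCombination_rpow_le {p : ℝ} (hp : 1 ≤ p) {a : ℕ → ℝ} (ha : ∀ n, 0 ≤ a n)
    (s : Finset ℕ) {k : ℕ} {N : Fin k → Finset ℕ} (hadm : ∀ j, Admissible (N j))
    (hsep : SepChain N) :
    ∑ j, mu (blockCombination a s) (N j) ^ p ≤ ∑ n ∈ s, a n ^ p := by
  simp_rw [mu_blockCombination ha]
  calc ∑ j, (∑ n ∈ s, (#(N j ∩ Mblock n) : ℝ) / 2 ^ (n - 1) * a n) ^ p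
      ≤ ∑ j, ∑ n ∈ s, (#(N j ∩ Mblock n) : ℝ) / 2 ^ (n - 1) * a n ^ p :=
        sum_le_sum fun j _ => Real.rpow_sum_mul_le_sum_mul_rpow s hp
          (fun n => by positivity) ha ((hadm j).sum_card_inter_Mblock_div_le_one s)
    _ = ∑ n ∈ s, (∑ j, (#(N j ∩ Mblock n) : ℝ) / 2 ^ (n - 1)) * a n ^ p := by
        rw [sum_comm]
        simp_rw [sum_mul]
    _ ≤ ∑ n ∈ s, a n ^ p :=
        sum_le_sum fun n _ => mul_le_of_le_one_left (Real.rpow_nonneg (ha n) p)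
          (hsep.sum_card_inter_Mblock_div_le_one n)

lemma mu_blockCombination_Mblock {a : ℕ → ℝ} (ha : ∀ n, 0 ≤ a n) {s : Finset ℕ} {n : ℕ}
    (hn : n ∈ s) (hn0 : n ≠ 0) : mu (blockCombination a s) (Mblock n) = a n := by
  rw [mu_blockCombination ha, sum_eq_single_of_mem n hn]
  · rw [inter_self, card_Mblock hn0]
    push_cast
    field_simp
  · intro m _ hmn
    rw [disjoint_iff_inter_eq_empty.1 (Mblock_disjoint hmn.symm), card_empty]
    simp

theorem BpNorm_blockCombination {p : ℝ} (hp : 1 ≤ p) {a : ℕ → ℝ} (ha : ∀ n, 0 ≤ a n)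
    {s : Finset ℕ} (hs : s.Nonempty) (hs0 : 0 ∉ s) :
    BpNorm p (blockCombination a s) = (∑ n ∈ s, a n ^ p) ^ (1 / p) := by
  refine IsGreatest.csSup_eq ⟨?_, ?_⟩
  · set e := s.orderEmbOfFin rfl
    have he (j : Fin #s) : e j ∈ s := s.orderEmbOfFin_mem rfl j
    refine ⟨#s, Mblock ∘ e, hs.card_pos,
      fun j => Mblock_admissible (ne_of_mem_of_not_mem (he j) hs0),
      sepChain_Mblock_comp e.strictMono, ?_⟩
    simp only [comp_apply, mu_blockCombination_Mblock ha (he _)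
      (ne_of_mem_of_not_mem (he _) hs0)]
    have hsum := sum_map univ e.toEmbedding fun n => a n ^ p
    rw [s.map_orderEmbOfFin_univ rfl] at hsum
    rw [hsum]
    rfl
  · rintro t ⟨k, N, -, hadm, hsep, rfl⟩
    exact Real.rpow_le_rpow (sum_nonneg fun j _ => Real.rpow_nonneg (sum_nonneg fun _ _ =>
      abs_nonneg _) p) (sum_mu_blockCombination_rpow_le hp ha s hadm hsep) (by positivity)

/-- Let `p ∈ (1,∞)` and, for `1 ≤ q ≤ r`, let
`y_{q,r} = ∑_{n=q}^r (1/n) x_n`, where `x_n = 2^{-(n-1)} ∑_{j∈M_n} b_j` is the normalized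
indicator of `M_n = [2^{n-1}, 2^n) ∩ ℕ`.  Then `‖y_{q,r}‖_{B_p} = (∑_{n=q}^r n^{-p})^{1/p}`. -/
theorem stmt_14 (p : ℝ) (hp : 1 < p) (q r : ℕ) (hq : 1 ≤ q) (hqr : q ≤ r) :
    BpNorm p (fun j => ∑ n ∈ Finset.Icc q r,
        (1 / (n : ℝ)) * (if j ∈ Mblock n then (1 / 2 ^ (n - 1) : ℝ) else 0)) =
      (∑ n ∈ Finset.Icc q r, ((n : ℝ) ^ p)⁻¹) ^ (1 / p) := by
  change BpNorm p (blockCombination (fun n : ℕ => 1 / (n : ℝ)) (Icc q r)) = _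
  rw [BpNorm_blockCombination hp.le (fun n => by positivity) (nonempty_Icc.2 hqr)
    (by simp only [mem_Icc]; omega)]
  simp only [one_div, Real.inv_rpow (Nat.cast_nonneg _)]
end
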